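/- arXiv:1901.06737 — 7 statements merged into one kernel-verified Lean document; each statement's English description precedes it below -/
import Mathlib

section
/- Consider players arranged in disjoint directed cycles, where each player's unique first choice is her successor on her cycle and all other players are tied in second place, rooms all of size 3, comparison by best roommate. Then an assignment in which every player has a first-choice roommate exists if and only if the directed graph consisting of the cycle arcs admits a directed triangle cover; in particular if all cycles have length 3, the partition into the cycles themselves is a Pareto optimal assignment. -/
open Finset

/-- `A` is a feasible assignment for room capacities `r`: room `j` has exactly `r j` players. -/
def Feasible {P : Type*} [Fintype P] [DecidableEq P] {k : ℕ} (r : Fin k → ℕ)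
    (A : P → Fin k) : Prop :=
  ∀ j : Fin k, (univ.filter fun p => A p = j).card = r j

/-- The rank (smaller = more preferred) of player `i`'s best roommate under assignment `A`. -/
def bestRank {P ι : Type*} [Fintype P] [DecidableEq P] [DecidableEq ι]
    (rk : P → P → ℕ) (A : P → ι) (i : P) : WithTop ℕ :=
  ((univ.filter fun p => p ≠ i ∧ A p = A i).image (rk i)).min

/-- The rank (smaller = more preferred) of player `i`'s worst roommate under assignment `A`. -/
def worstRank {P ι : Type*} [Fintype P] [DecidableEq P] [DecidableEq ι]
    (rk : P → P → ℕ) (A : P → ι) (i : P) : WithBot ℕ :=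
  ((univ.filter fun p => p ≠ i ∧ A p = A i).image (rk i)).max

/-- Pareto domination under best-roommate comparison: `A'` dominates `A`. -/
def DominatesB {P ι : Type*} [Fintype P] [DecidableEq P] [DecidableEq ι]
    (rk : P → P → ℕ) (A' A : P → ι) : Prop :=
  (∀ i, bestRank rk A' i ≤ bestRank rk A i) ∧ ∃ i, bestRank rk A' i < bestRank rk A i

/-- Pareto domination under worst-roommate comparison: `A'` dominates `A`. -/
def DominatesW {P ι : Type*} [Fintype P] [DecidableEq P] [DecidableEq ι]
    (rk : P → P → ℕ) (A' A : P → ι) : Prop :=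
  (∀ i, worstRank rk A' i ≤ worstRank rk A i) ∧ ∃ i, worstRank rk A' i < worstRank rk A i

/-- Strict preferences: each player `i` ranks distinct other players differently. -/
def StrictPrefs {P : Type*} (rk : P → P → ℕ) : Prop :=
  ∀ i j j' : P, j ≠ i → j' ≠ i → rk i j = rk i j' → j = j'

/-- A directed triangle cover of a digraph `D`. -/
def IsDirTriangleCover {V : Type*} [DecidableEq V] (D : V → V → Prop)
    (T : Finset (Finset V)) : Prop :=
  (∀ t ∈ T, t.card = 3 ∧ ∃ u v w : V, t = {u, v, w} ∧ D u v ∧ D v w ∧ D w u) ∧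
  (∀ x : V, ∃! t, t ∈ T ∧ x ∈ t)


lemma triple_of_invariant {P : Type*} [DecidableEq P]
    (σ : Equiv.Perm P) (hσ : ∀ i : P, σ i ≠ i) (S : Finset P)
    (hcard : S.card = 3) (hinv : ∀ x ∈ S, σ x ∈ S) :
    ∃ u v w : P, S = {u, v, w} ∧ σ u = v ∧ σ v = w ∧ σ w = u := by
  obtain ⟨a, b, c, hab, hac, hbc, rfl⟩ := Finset.card_eq_three.mp hcard
  have ha : a ∈ ({a,b,c} : Finset P) := by simp
  have hb : b ∈ ({a,b,c} : Finset P) := by simp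
  have hc : c ∈ ({a,b,c} : Finset P) := by simp
  have hSa := hinv a ha
  have hSb := hinv b hb
  have hSc := hinv c hc
  simp only [Finset.mem_insert, Finset.mem_singleton] at hSa hSb hSc
  have inj := σ.injective
  rcases hSa with h1 | h1 | h1
  · exact absurd h1 (hσ a)
  · -- σ a = b
    rcases hSb with h2 | h2 | h2
    · -- σ b = a : contradiction via c
      rcases hSc with h3 | h3 | h3
      · exact absurd (inj (h3.trans h2.symm)) (Ne.symm hbc)
      · exact absurd (inj (h3.trans h1.symm)) (Ne.symm hac)
      · exact absurd h3 (hσ c)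
    · exact absurd h2 (hσ b)
    · -- σ b = c
      rcases hSc with h3 | h3 | h3
      · exact ⟨a, b, c, rfl, h1, h2, h3⟩
      · exact absurd (inj (h3.trans h1.symm)) (Ne.symm hac)
      · exact absurd h3 (hσ c)
  · -- σ a = c
    rcases hSc with h3 | h3 | h3
    · -- σ c = a
      rcases hSb with h2 | h2 | h2
      · exact absurd (inj (h2.trans h3.symm)) hbc
      · exact absurd h2 (hσ b)
      · exact absurd (inj (h2.trans h1.symm)) (Ne.symm hab)
    · -- σ c = b
      have hS : ({a,b,c} : Finset P) = {a,c,b} := by ext x; simp; tauto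
      exact ⟨a, c, b, hS, h1, h3, by
        rcases hSb with h2 | h2 | h2
        · exact h2
        · exact absurd h2 (hσ b)
        · exact absurd (inj (h2.trans h1.symm)) (Ne.symm hab)⟩
    · exact absurd h3 (hσ c)

/-- Players arranged in disjoint directed cycles (successor permutation `σ`),
each ranking her successor first and everyone else second, rooms of size 3,
best-roommate comparison.  An assignment where everyone has a first-choice
roommate exists iff the cycle arcs admit a directed triangle cover; and if all
cycles have length 3, the partition into the cycles is Pareto optimal. -/
theorem cycles_first_choice_iff_dir_cover {P : Type*} [Fintype P] [DecidableEq P]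
    (k : ℕ) (hcard : Fintype.card P = 3 * k)
    (σ : Equiv.Perm P) (hσ : ∀ i : P, σ i ≠ i)
    (rk : P → P → ℕ) (hrk : ∀ i j : P, rk i j = if j = σ i then 1 else 2) :
    ((∃ A : P → Fin k,
        (∀ j : Fin k, (univ.filter fun p => A p = j).card = 3) ∧
        ∀ i : P, A (σ i) = A i) ↔
      ∃ T : Finset (Finset P), IsDirTriangleCover (fun i j => σ i = j) T) ∧
    ((∀ i : P, σ (σ (σ i)) = i) →
      ∀ A : P → Fin k, (∀ j : Fin k, (univ.filter fun p => A p = j).card = 3) →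
        (∀ i : P, A (σ i) = A i) →
        ∀ A' : P → Fin k, (∀ j : Fin k, (univ.filter fun p => A' p = j).card = 3) →
          ¬ DominatesB rk A' A) := by
  constructor
  · constructor
    · -- forward: fibers form a cover
      rintro ⟨A, hA, hfc⟩
      refine ⟨Finset.univ.image (fun j => univ.filter fun p => A p = j), ?_, ?_⟩
      · intro t ht
        simp only [Finset.mem_image, Finset.mem_univ, true_and] at ht
        obtain ⟨j, rfl⟩ := ht
        refine ⟨hA j, ?_⟩
        obtain ⟨u, v, w, hS, h1, h2, h3⟩ := triple_of_invariant σ hσ _ (hA j)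
          (fun x hx => by
            simp only [Finset.mem_filter, Finset.mem_univ, true_and] at hx ⊢
            rw [hfc x, hx])
        exact ⟨u, v, w, hS, h1, h2, h3⟩
      · intro x
        refine ⟨univ.filter fun p => A p = A x, ⟨?_, ?_⟩, ?_⟩
        · exact Finset.mem_image_of_mem _ (Finset.mem_univ _)
        · simp
        · rintro t ⟨ht, hxt⟩
          simp only [Finset.mem_image, Finset.mem_univ, true_and] at ht
          obtain ⟨j, rfl⟩ := ht
          simp only [Finset.mem_filter, Finset.mem_univ, true_and] at hxt
          rw [hxt]
    · -- backward: cover gives assignment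
      rintro ⟨T, hT1, hT2⟩
      -- T.card = k
      have hdisj : ∀ t1 ∈ T, ∀ t2 ∈ T, t1 ≠ t2 → Disjoint t1 t2 := by
        intro t1 h1 t2 h2 hne
        rw [Finset.disjoint_left]
        intro x hx1 hx2
        obtain ⟨t, -, huniq⟩ := hT2 x
        exact hne ((huniq t1 ⟨h1, hx1⟩).trans (huniq t2 ⟨h2, hx2⟩).symm)
      have huniv : T.biUnion id = Finset.univ := by
        apply Finset.eq_univ_of_forall
        intro x
        obtain ⟨t, ⟨ht, hxt⟩, -⟩ := hT2 x
        exact Finset.mem_biUnion.mpr ⟨t, ht, hxt⟩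
      have hcardT : T.card = k := by
        have h1 : (T.biUnion id).card = ∑ t ∈ T, t.card :=
          Finset.card_biUnion hdisj
        have h2 : ∑ t ∈ T, t.card = 3 * T.card := by
          rw [Finset.sum_congr rfl (fun t ht => (hT1 t ht).1), Finset.sum_const,
            smul_eq_mul, mul_comm]
        rw [huniv, Finset.card_univ, hcard, h2] at h1
        omega
      have e : {t // t ∈ T} ≃ Fin k := T.equivFin.trans (finCongr hcardT)
      set A : P → Fin k := fun x => e ⟨T.choose (x ∈ ·) (hT2 x), T.choose_mem _ (hT2 x)⟩
        with hAdef
      have hAfib : ∀ j : Fin k, (univ.filter fun p => A p = j) = (e.symm j : Finset P) := by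
        intro j
        ext p
        simp only [Finset.mem_filter, Finset.mem_univ, true_and, hAdef]
        constructor
        · intro h
          have : (⟨T.choose (p ∈ ·) (hT2 p), T.choose_mem _ (hT2 p)⟩ : {t // t ∈ T})
              = e.symm j := by
            rw [← h, Equiv.symm_apply_apply]
          have hp := T.choose_property (p ∈ ·) (hT2 p)
          rw [← Subtype.coe_mk (T.choose (p ∈ ·) (hT2 p)) (T.choose_mem _ (hT2 p)),
            this] at hp
          exact hp
        · intro hp
          obtain ⟨t, -, huniq⟩ := hT2 p
          have h1 : T.choose (p ∈ ·) (hT2 p) = t :=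
            huniq _ ⟨T.choose_mem _ (hT2 p), T.choose_property (p ∈ ·) (hT2 p)⟩
          have h2 : ((e.symm j : {t // t ∈ T}) : Finset P) = t :=
            huniq _ ⟨(e.symm j).2, hp⟩
          have : (⟨T.choose (p ∈ ·) (hT2 p), T.choose_mem _ (hT2 p)⟩ : {t // t ∈ T})
              = e.symm j := Subtype.ext (h1.trans h2.symm)
          rw [this, Equiv.apply_symm_apply]
      refine ⟨A, fun j => by rw [hAfib j]; exact ((hT1 _ (e.symm j).2).1), ?_⟩
      -- σ-invariance
      intro i
      have hAi : i ∈ (univ.filter fun p => A p = A i) := by simp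
      rw [hAfib (A i)] at hAi
      set t := ((e.symm (A i) : {t // t ∈ T}) : Finset P) with htdef
      obtain ⟨hc3, u, v, w, hS, h1, h2, h3⟩ := hT1 t (e.symm (A i)).2
      have hσi : σ i ∈ t := by
        rw [hS] at hAi ⊢
        simp only [Finset.mem_insert, Finset.mem_singleton] at hAi ⊢
        rcases hAi with rfl | rfl | rfl
        · rw [h1]; tauto
        · rw [h2]; tauto
        · rw [h3]; tauto
      have := (Finset.mem_filter.mp (by rw [hAfib (A i)]; exact hσi :
        σ i ∈ univ.filter fun p => A p = A i)).2
      exact this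
  · -- Pareto optimality
    intro _ A hA hfc A' hA' hdom
    obtain ⟨hle, i, hlt⟩ := hdom
    have h1 : bestRank rk A i ≤ ((1 : ℕ) : WithTop ℕ) := by
      apply Finset.min_le
      simp only [Finset.mem_image, Finset.mem_filter, Finset.mem_univ, true_and]
      exact ⟨σ i, ⟨hσ i, hfc i⟩, by rw [hrk]; simp⟩
    have h2 : bestRank rk A' i < ((1 : ℕ) : WithTop ℕ) := lt_of_lt_of_le hlt h1
    have hne : bestRank rk A' i ≠ ⊤ := h2.ne_top
    obtain ⟨a, ha⟩ := WithTop.ne_top_iff_exists.mp hne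
    have hmem : a ∈ (univ.filter fun p => p ≠ i ∧ A' p = A' i).image (rk i) :=
      Finset.mem_of_min ha.symm
    simp only [Finset.mem_image, Finset.mem_filter, Finset.mem_univ, true_and] at hmem
    obtain ⟨p, ⟨hpi, -⟩, hpa⟩ := hmem
    rw [← ha] at h2
    have : a < 1 := WithTop.coe_lt_coe.mp h2
    rw [hrk] at hpa
    split at hpa <;> omega
end

section
/- Let G be a finite simple graph with |V(G)| divisible by 3 and minimum degree at least 2. Form the roommate instance on V(G) with complete weak preferences where player u ranks all its G-neighbors first and all non-neighbors second, rooms of size 3, comparison by worst roommate. Then there exists a feasible assignment giving every player two first-ranked roommates if and only if G has a triangle cover; and any such assignment is Pareto optimal. -/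
open Finset

def IsTriangleCover {V : Type*} [Fintype V] [DecidableEq V] (G : SimpleGraph V)
    (T : Finset (Finset V)) : Prop :=
  (∀ t ∈ T, t.card = 3 ∧ ∀ u ∈ t, ∀ v ∈ t, u ≠ v → G.Adj u v) ∧
  (∀ v : V, ∃! t, t ∈ T ∧ v ∈ t)

private lemma exists_roommate {P : Type*} [Fintype P] [DecidableEq P] {k : ℕ}
    (A : P → Fin k) (hA : ∀ j : Fin k, (univ.filter fun p => A p = j).card = 3)
    (i : P) : ∃ p, p ≠ i ∧ A p = A i := by
  by_contra h
  push_neg at h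
  have hsub : (univ.filter fun p => A p = A i) ⊆ {i} := by
    intro p hp
    simp only [mem_filter, mem_univ, true_and] at hp
    simp only [mem_singleton]
    by_contra hne
    exact h p hne hp
  have := Finset.card_le_card hsub
  rw [hA (A i), Finset.card_singleton] at this
  omega

/-- For a graph `G` on `3k` vertices with minimum degree at least 2, in the
roommate instance where each player ranks her `G`-neighbours first and everyone
else second, with rooms of size 3 and worst-roommate comparison: an assignment
giving every player two first-ranked roommates exists iff `G` has a triangle
cover, and any such assignment is Pareto optimal. -/
theorem neighbours_first_worst_case {V : Type*} [Fintype V] [DecidableEq V]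
    (G : SimpleGraph V) [DecidableRel G.Adj]
    (k : ℕ) (hcard : Fintype.card V = 3 * k)
    (hdeg : ∀ v : V, 2 ≤ G.degree v)
    (rk : V → V → ℕ) (hrk : ∀ u v : V, rk u v = if G.Adj u v then 1 else 2) :
    ((∃ A : V → Fin k,
        (∀ j : Fin k, (univ.filter fun p => A p = j).card = 3) ∧
        ∀ u v : V, u ≠ v → A u = A v → G.Adj u v) ↔
      ∃ T : Finset (Finset V), IsTriangleCover G T) ∧
    (∀ A : V → Fin k, (∀ j : Fin k, (univ.filter fun p => A p = j).card = 3) →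
      (∀ u v : V, u ≠ v → A u = A v → G.Adj u v) →
      ∀ A' : V → Fin k, (∀ j : Fin k, (univ.filter fun p => A' p = j).card = 3) →
        ¬ DominatesW rk A' A) := by
  classical
  constructor
  · constructor
    · rintro ⟨A, hA3, hAadj⟩
      refine ⟨(univ : Finset (Fin k)).image (fun j => univ.filter fun p => A p = j), ?_, ?_⟩
      · intro t ht
        simp only [mem_image, mem_univ, true_and] at ht
        obtain ⟨j, rfl⟩ := ht
        refine ⟨hA3 j, ?_⟩
        intro u hu v hv huv
        simp only [mem_filter] at hu hv
        exact hAadj u v huv (hu.2.trans hv.2.symm)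
      · intro v
        refine ⟨univ.filter fun p => A p = A v, ⟨mem_image_of_mem _ (mem_univ _), by simp⟩, ?_⟩
        rintro t ⟨ht, hvt⟩
        simp only [mem_image, mem_univ, true_and] at ht
        obtain ⟨j, rfl⟩ := ht
        simp only [mem_filter, mem_univ, true_and] at hvt
        rw [hvt]
    · rintro ⟨T, hT1, hT2⟩
      have hdisj : ∀ (s : Finset V), s ∈ T → ∀ (t : Finset V), t ∈ T → s ≠ t →
          Disjoint (id s) (id t) := by
        intro s hs t ht hst
        rw [Finset.disjoint_left]
        intro a has hat
        exact hst ((hT2 a).unique ⟨hs, has⟩ ⟨ht, hat⟩)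
      have huniv : T.biUnion id = univ := by
        ext v
        simp only [mem_biUnion, id, mem_univ, iff_true]
        obtain ⟨t, ht, hv⟩ := (hT2 v).exists
        exact ⟨t, ht, hv⟩
      have hcardT : T.card = k := by
        have h1 := Finset.card_biUnion hdisj
        rw [huniv] at h1
        have h2 : ∑ t ∈ T, (id t).card = 3 * T.card := by
          simp only [id]
          rw [Finset.sum_congr rfl (fun t ht => (hT1 t ht).1), Finset.sum_const, smul_eq_mul,
            mul_comm]
        rw [card_univ, hcard, h2] at h1
        omega
      have ecard : Fintype.card {t // t ∈ T} = k := by rw [Fintype.card_coe]; exact hcardT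
      let e : {t // t ∈ T} ≃ Fin k := Fintype.equivFinOfCardEq ecard
      have hft : ∀ v : V, (hT2 v).exists.choose ∈ T ∧ v ∈ (hT2 v).exists.choose :=
        fun v => (hT2 v).exists.choose_spec
      refine ⟨fun v => e ⟨(hT2 v).exists.choose, (hft v).1⟩, ?_, ?_⟩
      · intro j
        have hset : (univ.filter fun p => e ⟨(hT2 p).exists.choose, (hft p).1⟩ = j) =
            (e.symm j : Finset V) := by
          ext p
          simp only [mem_filter, mem_univ, true_and]
          constructor
          · intro hpj
            have : (⟨(hT2 p).exists.choose, (hft p).1⟩ : {t // t ∈ T}) = e.symm j := by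
              rw [Equiv.eq_symm_apply, hpj]
            have h2 : (hT2 p).exists.choose = (e.symm j : Finset V) :=
              congrArg Subtype.val this
            exact h2 ▸ (hft p).2
          · intro hp
            have h2 : (hT2 p).exists.choose = (e.symm j : Finset V) :=
              (hT2 p).unique ⟨(hft p).1, (hft p).2⟩ ⟨(e.symm j).2, hp⟩
            have : (⟨(hT2 p).exists.choose, (hft p).1⟩ : {t // t ∈ T}) = e.symm j :=
              Subtype.ext h2
            rw [this, Equiv.apply_symm_apply]
        rw [hset]
        exact (hT1 _ (e.symm j).2).1
      · intro u v huv hA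
        have : (⟨(hT2 u).exists.choose, (hft u).1⟩ : {t // t ∈ T}) =
            ⟨(hT2 v).exists.choose, (hft v).1⟩ := e.injective hA
        have h2 : (hT2 u).exists.choose = (hT2 v).exists.choose := congrArg Subtype.val this
        exact (hT1 _ (hft u).1).2 u (hft u).2 v (h2 ▸ (hft v).2) huv
  · rintro A hA3 hAadj A' hA'3 ⟨hle, i, hlt⟩
    have hwA : worstRank rk A i = (1 : ℕ) := by
      have himg : ((univ.filter fun p => p ≠ i ∧ A p = A i).image (rk i)) = {1} := by
        ext n
        simp only [mem_image, mem_filter, mem_univ, true_and, mem_singleton]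
        constructor
        · rintro ⟨p, ⟨hpi, hpA⟩, rfl⟩
          rw [hrk, if_pos (hAadj i p (Ne.symm hpi) hpA.symm)]
        · rintro rfl
          obtain ⟨p, hpi, hpA⟩ := exists_roommate A hA3 i
          exact ⟨p, ⟨hpi, hpA⟩, by rw [hrk, if_pos (hAadj i p (Ne.symm hpi) hpA.symm)]⟩
      rw [worstRank, himg, Finset.max_singleton]
      rfl
    have hwA' : (1 : WithBot ℕ) ≤ worstRank rk A' i := by
      obtain ⟨p, hpi, hpA⟩ := exists_roommate A' hA'3 i
      have hmem : rk i p ∈ ((univ.filter fun p => p ≠ i ∧ A' p = A' i).image (rk i)) :=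
        mem_image_of_mem _ (by simp [hpi, hpA])
      have h1 : (1 : WithBot ℕ) ≤ (rk i p : WithBot ℕ) := by
        rw [hrk]
        split <;> simp
      exact le_trans h1 (Finset.le_max hmem)
    rw [hwA] at hlt
    exact absurd (lt_of_le_of_lt hwA' hlt) (lt_irrefl _)
end

section
/- Fix an instance with strict complete preferences where comparison is by worst roommate. Consider the serial dictatorship in which dictators are processed in order and each dictator takes a smallest available room together with her best available roommates. Then the output of this serial dictatorship is Pareto optimal. -/
open Finset

/-- Serial dictatorship with worst-roommate comparison: rooms are processed in
nondecreasing order of capacity, room `j` has a dictator `d j` whose roommates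
are exactly her most-preferred players among those not placed in earlier rooms
(i.e. she strictly prefers each of her roommates to every player placed in a
later room).  Such an assignment is Pareto optimal. -/
theorem serial_dictatorship_worst_pareto_optimal {P : Type*} [Fintype P] [DecidableEq P]
    (k : ℕ) (r : Fin k → ℕ) (hmono : Monotone r)
    (rk : P → P → ℕ) (hstrict : StrictPrefs rk)
    (hsum : ∑ j, r j = Fintype.card P)
    (A : P → Fin k) (hF : Feasible r A)
    (d : Fin k → P) (hd : ∀ j : Fin k, A (d j) = j)
    (hSD : ∀ j : Fin k, ∀ p q : P, A p = j → p ≠ d j → j < A q →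
        rk (d j) p < rk (d j) q) :
    ∀ A' : P → Fin k, Feasible r A' → ¬ DominatesW rk A' A := by

  intro A' hF' hdom
  obtain ⟨hle, i0, hlt⟩ := hdom
  -- Main claim: for every room `j`, the A'-room of the dictator `d j` (as a set
  -- of players) equals the A-room `j`.
  have key : ∀ n : ℕ, ∀ j : Fin k, (j : ℕ) = n →
      (univ.filter fun p => A' p = A' (d j)) = (univ.filter fun p => A p = j) := by
    intro n
    induction n using Nat.strong_induction_on with
    | _ n ih =>
      intro j hj
      subst hj
      have IH : ∀ i : Fin k, i < j →
          (univ.filter fun p => A' p = A' (d i)) = (univ.filter fun p => A p = i) :=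
        fun i hi => ih i.val hi i rfl
      set Sj := univ.filter fun p => A' p = A' (d j) with hSjdef
      set Rj := univ.filter fun p => A p = j with hRjdef
      have hdSj : d j ∈ Sj := by simp [hSjdef]
      have hdRj : d j ∈ Rj := by simp [hRjdef, hd j]
      have cardS : Sj.card = r (A' (d j)) := hF' _
      have cardR : Rj.card = r j := hF j
      -- Step A: every member of Sj is assigned (by A) to room ≥ j
      have stepA : ∀ p ∈ Sj, j ≤ A p := by
        intro p hp
        by_contra hc
        push_neg at hc
        have hpi : p ∈ univ.filter fun q => A q = A p := by simp
        rw [← IH (A p) hc] at hpi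
        have h1 : A' p = A' (d (A p)) := by simpa using hpi
        have h2 : A' p = A' (d j) := by simpa [hSjdef] using hp
        have hdj : d j ∈ univ.filter fun q => A' q = A' (d (A p)) := by
          simp [← h1, h2]
        rw [IH (A p) hc] at hdj
        have h3 : A (d j) = A p := by simpa using hdj
        rw [hd j] at h3
        exact ne_of_gt hc h3
      -- auxiliary facts about earlier rooms
      have hAdne : ∀ i : Fin k, i < j → A' (d j) ≠ A' (d i) := by
        intro i hi heq
        have hdj' : d j ∈ univ.filter fun q => A' q = A' (d i) := by simp [heq]
        rw [IH i hi] at hdj'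
        have h3 : A (d j) = i := by simpa using hdj'
        rw [hd j] at h3
        exact ne_of_gt hi h3
      have hinj : ∀ i i' : Fin k, i < j → i' < j → A' (d i) = A' (d i') → i = i' := by
        intro i i' hi hi' heq
        have h1 : d i ∈ univ.filter fun q => A' q = A' (d i') := by simp [heq]
        rw [IH i' hi'] at h1
        have h2 : A (d i) = i' := by simpa using h1
        rw [hd i] at h2
        exact h2
      have hcap : ∀ i : Fin k, i < j → r (A' (d i)) = r i := by
        intro i hi
        have h1 : (univ.filter fun p => A' p = A' (d i)).card = r (A' (d i)) := hF' _
        rw [IH i hi, hF i] at h1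
        exact h1.symm
      -- Step B: r j ≤ r (A' (d j))
      have stepB : r j ≤ r (A' (d j)) := by
        by_contra hB
        push_neg at hB
        set B := univ.filter fun i : Fin k => r i < r j with hBdef
        have hBsub : ∀ i ∈ B, i < j := by
          intro i hi
          by_contra h
          push_neg at h
          have hri := hmono h
          simp only [hBdef, mem_filter, mem_univ, true_and] at hi
          omega
        have himg : (B.image fun i => A' (d i)) ⊆ B := by
          intro x hx
          simp only [mem_image] at hx
          obtain ⟨i, hi, rfl⟩ := hx
          have hlt' := hBsub i hi
          have hci := hcap i hlt'
          simp only [hBdef, mem_filter, mem_univ, true_and] at hi ⊢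
          omega
        have hnotmem : A' (d j) ∉ B.image fun i => A' (d i) := by
          intro hx
          simp only [mem_image] at hx
          obtain ⟨i, hi, heq⟩ := hx
          exact hAdne i (hBsub i hi) heq.symm
        have hmem : A' (d j) ∈ B := by
          simp only [hBdef, mem_filter, mem_univ, true_and]
          exact hB
        have hins : insert (A' (d j)) (B.image fun i => A' (d i)) ⊆ B := by
          intro x hx
          rcases mem_insert.mp hx with rfl | hx
          · exact hmem
          · exact himg hx
        have hcard1 : (B.image fun i => A' (d i)).card = B.card :=
          Finset.card_image_of_injOn fun a ha b hb hab =>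
            hinj a b (hBsub a ha) (hBsub b hb) hab
        have hle2 := Finset.card_le_card hins
        rw [Finset.card_insert_of_notMem hnotmem, hcard1] at hle2
        omega
      have hr1 : 1 ≤ r j := by
        have h0 : 0 < Rj.card := Finset.card_pos.mpr ⟨d j, hdRj⟩
        omega
      -- worstRank expressed via erase
      have hWA : worstRank rk A (d j) = ((Rj.erase (d j)).image (rk (d j))).max := by
        unfold worstRank
        congr 2
        ext p
        simp [hRjdef, hd j, Finset.mem_erase, and_comm]
      have hWA' : worstRank rk A' (d j) = ((Sj.erase (d j)).image (rk (d j))).max := by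
        unfold worstRank
        congr 2
        ext p
        simp [hSjdef, Finset.mem_erase, and_comm]
      by_cases hr : r j = 1
      · -- room j is a singleton
        obtain ⟨a, ha⟩ := Finset.card_eq_one.mp (by rw [cardR, hr] : Rj.card = 1)
        have hda : d j = a := by
          have h := hdRj
          rw [ha, Finset.mem_singleton] at h
          exact h
        subst hda
        have hRE : Rj.erase (d j) = ∅ := by rw [ha]; simp
        have hbot : worstRank rk A (d j) = ⊥ := by rw [hWA, hRE]; simp
        have hbot' : worstRank rk A' (d j) = ⊥ := le_bot_iff.mp (hbot ▸ hle (d j))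
        rw [hWA'] at hbot'
        have hSE : Sj.erase (d j) = ∅ := by
          have := Finset.max_eq_bot.mp hbot'
          exact Finset.image_eq_empty.mp this
        have : Sj = {d j} := by
          have h1 : Sj ⊆ {d j} := by
            intro p hp
            rcases eq_or_ne p (d j) with rfl | hne
            · simp
            · exact absurd (Finset.mem_erase.mpr ⟨hne, hp⟩) (by rw [hSE]; simp)
          exact Finset.Subset.antisymm h1 (by simpa using hdSj)
        rw [this, ha]
      · have hr2 : 2 ≤ r j := by omega
        have hRe : (Rj.erase (d j)).Nonempty := by
          rw [← Finset.card_pos, Finset.card_erase_of_mem hdRj, cardR]; omega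
        obtain ⟨m, hm⟩ := Finset.max_of_nonempty (hRe.image (rk (d j)))
        obtain ⟨pstar, hpstar, hpm⟩ := Finset.mem_image.mp (Finset.mem_of_max hm)
        have hpstarR : A pstar = j := by
          have := (Finset.mem_erase.mp hpstar).2
          simpa [hRjdef] using this
        have hpstarne : pstar ≠ d j := (Finset.mem_erase.mp hpstar).1
        -- all A'-roommates of d j have rank ≤ m
        have hmax' : ((Sj.erase (d j)).image (rk (d j))).max
            ≤ ((Rj.erase (d j)).image (rk (d j))).max := by
          rw [← hWA', ← hWA]
          exact hle (d j)
        have hrank_le : ∀ p ∈ Sj.erase (d j), rk (d j) p ≤ m := by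
          intro p hp
          have h1 := le_trans
            (Finset.le_max (Finset.mem_image_of_mem (rk (d j)) hp)) (hmax'.trans hm.le)
          exact WithBot.coe_le_coe.mp h1
        -- hence all A'-roommates are in room j
        have hsub : Sj.erase (d j) ⊆ Rj.erase (d j) := by
          intro p hp
          obtain ⟨hpne, hpS⟩ := Finset.mem_erase.mp hp
          have hjle := stepA p hpS
          rcases lt_or_eq_of_le hjle with hjlt | hjeq
          · exact absurd (hSD j pstar p hpstarR hpstarne hjlt)
              (by rw [hpm]; exact not_lt_of_ge (hrank_le p hp))
          · exact Finset.mem_erase.mpr ⟨hpne, by simp [hRjdef, hjeq.symm]⟩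
        have hcards : (Rj.erase (d j)).card ≤ (Sj.erase (d j)).card := by
          rw [Finset.card_erase_of_mem hdRj, Finset.card_erase_of_mem hdSj, cardR, cardS]
          omega
        have heq : Sj.erase (d j) = Rj.erase (d j) :=
          Finset.eq_of_subset_of_card_le hsub hcards
        calc Sj = insert (d j) (Sj.erase (d j)) := (Finset.insert_erase hdSj).symm
          _ = insert (d j) (Rj.erase (d j)) := by rw [heq]
          _ = Rj := Finset.insert_erase hdRj
  -- From room equality, every player's roommate set agrees under A and A'
  have hroom : ∀ p : P, (univ.filter fun q => q ≠ p ∧ A' q = A' p)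
      = (univ.filter fun q => q ≠ p ∧ A q = A p) := by
    intro p
    have h := key (A p : ℕ) (A p) rfl
    have hp' : A' p = A' (d (A p)) := by
      have h1 : p ∈ univ.filter fun q => A q = A p := by simp
      rw [← h] at h1
      simpa using h1
    ext q
    simp only [mem_filter, mem_univ, true_and]
    constructor
    · rintro ⟨hq, hq'⟩
      refine ⟨hq, ?_⟩
      have h1 : q ∈ univ.filter fun x => A' x = A' (d (A p)) := by
        simp [hq'.trans hp']
      rw [h] at h1
      simpa using h1
    · rintro ⟨hq, hq'⟩
      refine ⟨hq, ?_⟩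
      have h1 : q ∈ univ.filter fun x => A x = A p := by simp [hq']
      rw [← h] at h1
      have h2 : A' q = A' (d (A p)) := by simpa using h1
      rw [h2, ← hp']
  have hweq : worstRank rk A' i0 = worstRank rk A i0 := by
    unfold worstRank
    rw [hroom i0]
  rw [hweq] at hlt
  exact lt_irrefl _ hlt
end

section
/- In a serial-dictatorship run with strict complete preferences and worst-roommate comparison, the first dictator receives, in the output assignment, the best possible worst-roommate rank she can receive in any feasible assignment using a room of the smallest capacity; hence any Pareto improvement must change a strictly earlier dictator's room, yielding by induction that the output is Pareto optimal. -/
/-!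
Let the rooms of the serial-dictatorship output `A` be taken in order, room `j` chosen by the
dictator `d j`. If some `A'` places `d j` with a player `q` from a strictly later room, then `q`
is worse for `d j` than every roommate she chose, so her worst roommate gets strictly worse.
For the first dictator no earlier room exists, so either she keeps her room or she is worse off.
If `A'` makes nobody worse off, induction over the dictators shows that each of them keeps her
room: earlier rooms are already fixed, so `d j`'s new room lies inside her old one, and it cannot
be smaller, since the capacities `r i` with `i < j` are already used by the earlier, unchanged
rooms and capacities are nondecreasing. Hence `A'` has the same rooms as `A` and improves nobody.
-/

open Finset

section Rooms

variable {P ι ι' : Type*} [Fintype P] [DecidableEq ι] [DecidableEq ι']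
  {A : P → ι} {A' : P → ι'}

def roomOf (A : P → ι) (i : P) : Finset P :=
  univ.filter fun p => A p = A i

@[simp]
theorem mem_roomOf {i p : P} : p ∈ roomOf A i ↔ A p = A i := by
  simp [roomOf]

theorem roomOf_congr {i j : P} (h : A i = A j) : roomOf A i = roomOf A j := by
  simp only [roomOf, h]

variable [DecidableEq P] {rk : P → P → ℕ}

theorem Feasible.card_roomOf {k : ℕ} {r : Fin k → ℕ} {A : P → Fin k}
    (hF : Feasible r A) (i : P) : (roomOf A i).card = r (A i) :=
  hF (A i)

theorem worstRank_congr {i : P} (h : roomOf A' i = roomOf A i) :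
    worstRank rk A' i = worstRank rk A i := by
  have hmem : ∀ p, A' p = A' i ↔ A p = A i := fun p => by
    simpa using congrArg (p ∈ ·) h
  simp only [worstRank, hmem]

theorem worstRank_lt_of_forall_rk_lt {i q : P} (hqi : q ≠ i) (hq : A' q = A' i)
    (h : ∀ p, p ≠ i → A p = A i → rk i p < rk i q) :
    worstRank rk A i < worstRank rk A' i := by
  calc worstRank rk A i < rk i q := by
        rw [worstRank, max_eq_sup_coe, Finset.sup_lt_iff (WithBot.bot_lt_coe _)]
        simp only [mem_image, mem_filter, mem_univ, true_and]
        rintro _ ⟨p, ⟨hpi, hp⟩, rfl⟩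
        exact WithBot.coe_lt_coe.mpr (h p hpi hp)
    _ ≤ worstRank rk A' i := le_max (mem_image_of_mem _ (by simp [hqi, hq]))

end Rooms

theorem Monotone.le_apply_of_injOn_Iic {ι α : Type*} [Fintype ι] [LinearOrder ι]
    [LinearOrder α] {r : ι → α} (hr : Monotone r) {g : ι → ι} {j : ι}
    (hg : Set.InjOn g (Set.Iic j)) (heq : ∀ i < j, r (g i) = r i) : r j ≤ r (g j) := by
  classical
  by_contra! hlt
  set L := univ.filter fun i => r i < r j
  have hL : ∀ i ∈ L, i < j := fun i hi => hr.reflect_lt (mem_filter.mp hi).2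
  have hjL : j ∉ L := by simp [L]
  have hcard : (insert j L).card ≤ L.card := by
    refine card_le_card_of_injOn g (fun i hi => ?_) (fun i hi i' hi' => ?_)
    · rcases mem_insert.mp hi with rfl | hi
      · simpa [L] using hlt
      · simpa [L, heq i (hL i hi)] using hi
    · have hle : ∀ x ∈ insert j L, x ≤ j := fun x hx =>
        (mem_insert.mp hx).elim le_of_eq fun hx => (hL x hx).le
      exact hg (hle i hi) (hle i' hi')
  rw [card_insert_of_notMem hjL] at hcard
  omega

structure IsSerialDictatorship {P : Type*} {k : ℕ} (rk : P → P → ℕ) (A : P → Fin k)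
    (d : Fin k → P) : Prop where
  room_dictator : ∀ j, A (d j) = j
  prefers_roommates : ∀ j p q, A p = j → p ≠ d j → j < A q → rk (d j) p < rk (d j) q

namespace IsSerialDictatorship

variable {P : Type*} [Fintype P] {k : ℕ} {r : Fin k → ℕ} {rk : P → P → ℕ}
  {A A' : P → Fin k} {d : Fin k → P}

theorem apply_eq_dictator_iff (hSD : IsSerialDictatorship rk A d) {i : Fin k} {q : P}
    (hroom : roomOf A' (d i) = roomOf A (d i)) : A' q = A' (d i) ↔ A q = i := by
  rw [← mem_roomOf, hroom, mem_roomOf, hSD.room_dictator]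

variable [DecidableEq P]

theorem worstRank_lt_of_later (hSD : IsSerialDictatorship rk A d) {j : Fin k} {q : P}
    (hq : A' q = A' (d j)) (hjq : j < A q) :
    worstRank rk A (d j) < worstRank rk A' (d j) := by
  refine worstRank_lt_of_forall_rk_lt (fun h => hjq.ne ?_) hq fun p hp hpj => ?_
  · rw [h, hSD.room_dictator]
  · exact hSD.prefers_roommates j p q (hpj.trans (hSD.room_dictator j)) hp hjq

theorem roomOf_eq (hSD : IsSerialDictatorship rk A d) (hF : Feasible r A)
    (hF' : Feasible r A') {j : Fin k} (hle : worstRank rk A' (d j) ≤ worstRank rk A (d j))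
    (hlater : ∀ q, A' q = A' (d j) → j ≤ A q) (hcap : r j ≤ r (A' (d j))) :
    roomOf A' (d j) = roomOf A (d j) := by
  have hsub : roomOf A' (d j) ⊆ roomOf A (d j) := fun q hq => by
    rw [mem_roomOf] at hq
    rw [mem_roomOf, hSD.room_dictator]
    by_contra hne
    exact (hSD.worstRank_lt_of_later hq (lt_of_le_of_ne (hlater q hq) (Ne.symm hne))).not_ge hle
  refine eq_of_subset_of_card_le hsub ?_
  rwa [hF.card_roomOf, hF'.card_roomOf, hSD.room_dictator]

theorem worstRank_le (hSD : IsSerialDictatorship rk A d) (hF : Feasible r A)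
    (hF' : Feasible r A') {j : Fin k} (hlater : ∀ q, A' q = A' (d j) → j ≤ A q)
    (hcap : r j ≤ r (A' (d j))) : worstRank rk A (d j) ≤ worstRank rk A' (d j) := by
  by_contra! hlt
  have hroom := hSD.roomOf_eq hF hF' hlt.le hlater hcap
  exact hlt.ne (worstRank_congr hroom)

theorem roomOf_eq_of_forall_worstRank_le (hSD : IsSerialDictatorship rk A d)
    (hmono : Monotone r) (hF : Feasible r A) (hF' : Feasible r A')
    (hle : ∀ i, worstRank rk A' i ≤ worstRank rk A i) (j : Fin k) :
    roomOf A' (d j) = roomOf A (d j) := by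
  induction j using WellFoundedLT.induction with
  | _ j IH =>
  have hlater : ∀ q, A' q = A' (d j) → j ≤ A q := fun q hq => by
    by_contra! hqj
    have hq' : A' q = A' (d (A q)) := (hSD.apply_eq_dictator_iff (IH _ hqj)).2 rfl
    have := (hSD.apply_eq_dictator_iff (IH _ hqj)).1 (hq.symm.trans hq')
    exact hqj.ne' (by rwa [hSD.room_dictator] at this)
  have hne : ∀ i i', i < i' → i' ≤ j → A' (d i) ≠ A' (d i') := fun i i' hii hi' h => by
    have := (hSD.apply_eq_dictator_iff (IH i (hii.trans_le hi'))).1 h.symm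
    exact hii.ne' (by rwa [hSD.room_dictator] at this)
  have hinj : Set.InjOn (fun i => A' (d i)) (Set.Iic j) := fun i hi i' hi' h => by
    rcases lt_trichotomy i i' with hii | rfl | hii
    exacts [absurd h (hne i i' hii hi'), rfl, absurd h.symm (hne i' i hii hi)]
  have hcap : ∀ i < j, r (A' (d i)) = r i := fun i hi => by
    rw [← hF'.card_roomOf, IH i hi, hF.card_roomOf, hSD.room_dictator]
  exact hSD.roomOf_eq hF hF' (hle _) hlater (hmono.le_apply_of_injOn_Iic hinj hcap)

theorem not_dominatesW (hSD : IsSerialDictatorship rk A d) (hmono : Monotone r)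
    (hF : Feasible r A) (hF' : Feasible r A') : ¬ DominatesW rk A' A := by
  rintro ⟨hle, i, hlt⟩
  have hroom := hSD.roomOf_eq_of_forall_worstRank_le hmono hF hF' hle (A i)
  have hi : A' i = A' (d (A i)) := (hSD.apply_eq_dictator_iff hroom).2 rfl
  have : roomOf A' i = roomOf A i := by
    rw [roomOf_congr hi, hroom, roomOf_congr (hSD.room_dictator _)]
  exact hlt.ne (worstRank_congr this)

end IsSerialDictatorship

theorem serial_dictatorship_first_dictator_optimal_general {P : Type*} [Fintype P] [DecidableEq P]
    (k : ℕ) (r : Fin k → ℕ) (hmono : Monotone r)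
    (rk : P → P → ℕ) (hk : 0 < k)
    (A : P → Fin k) (hF : Feasible r A)
    (d : Fin k → P) (hd : ∀ j : Fin k, A (d j) = j)
    (hSD : ∀ j : Fin k, ∀ p q : P, A p = j → p ≠ d j → j < A q →
        rk (d j) p < rk (d j) q) :
    (∀ A' : P → Fin k, Feasible r A' →
        r (A' (d ⟨0, hk⟩)) = r ⟨0, hk⟩ →
        worstRank rk A (d ⟨0, hk⟩) ≤ worstRank rk A' (d ⟨0, hk⟩)) ∧
    (∀ A' : P → Fin k, Feasible r A' → ¬ DominatesW rk A' A) := by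
  have hSD' : IsSerialDictatorship rk A d := ⟨hd, hSD⟩
  refine ⟨fun A' hF' hr0 => ?_, fun A' hF' => hSD'.not_dominatesW hmono hF hF'⟩
  exact hSD'.worstRank_le hF hF' (fun q _ => Fin.mk_le_of_le_val (Nat.zero_le _)) hr0.ge

/-- In a serial-dictatorship run with strict preferences and worst-roommate
comparison (rooms in nondecreasing capacity order, each dictator's roommates
preferred by her to all players of later rooms), the first dictator receives the
best worst-roommate rank she can receive in any feasible assignment placing her
in a room of the smallest capacity; and the output is Pareto optimal. -/
theorem serial_dictatorship_first_dictator_optimal {P : Type*} [Fintype P] [DecidableEq P]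
    (k : ℕ) (r : Fin k → ℕ) (hmono : Monotone r)
    (rk : P → P → ℕ) (hstrict : StrictPrefs rk)
    (hsum : ∑ j, r j = Fintype.card P) (hk : 0 < k)
    (A : P → Fin k) (hF : Feasible r A)
    (d : Fin k → P) (hd : ∀ j : Fin k, A (d j) = j)
    (hSD : ∀ j : Fin k, ∀ p q : P, A p = j → p ≠ d j → j < A q →
        rk (d j) p < rk (d j) q) :
    (∀ A' : P → Fin k, Feasible r A' →
        r (A' (d ⟨0, hk⟩)) = r ⟨0, hk⟩ →
        worstRank rk A (d ⟨0, hk⟩) ≤ worstRank rk A' (d ⟨0, hk⟩)) ∧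
    (∀ A' : P → Fin k, Feasible r A' → ¬ DominatesW rk A' A) :=
  serial_dictatorship_first_dictator_optimal_general k r hmono rk hk A hF d hd hSD
end

section
/- Given positive item sizes i_1,...,i_n each at least 2 and a bin size b, construct a roommate instance whose players are pairs (j, t) for 1 \le j \le n and 1 \le t \le i_j, where player (j,t) ranks (j, t+1 mod i_j) first (other rankings arbitrary below first), all rooms of size b, best-roommate comparison. Then an assignment in which every player rooms with her first choice exists if and only if the items can be partitioned into groups each summing exactly to b. -/
open Finset

lemma sigma_eq_of_parts {n : ℕ} {i : Fin n → ℕ} (p q : Σ j : Fin n, Fin (i j))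
    (h1 : p.1 = q.1) (h2 : (p.2 : ℕ) = (q.2 : ℕ)) : p = q := by
  obtain ⟨j, t⟩ := p
  obtain ⟨j', t'⟩ := q
  dsimp at h1
  subst h1
  simp only [Sigma.mk.inj_iff, heq_eq_eq, true_and]
  exact Fin.ext h2

lemma count_sigma {n : ℕ} (i : Fin n → ℕ) {m : ℕ} (f : Fin n → Fin m) (g : Fin m) :
    (univ.filter fun p : Σ j : Fin n, Fin (i j) => f p.1 = g).card
      = ∑ j ∈ univ.filter fun j => f j = g, i j := by
  have : (univ.filter fun p : Σ j : Fin n, Fin (i j) => f p.1 = g)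
      = (univ.filter fun j => f j = g).sigma fun _ => univ := by
    ext p
    simp [Finset.mem_sigma]
  rw [this, Finset.card_sigma]
  simp

/-- Bin packing reduction: players are pairs `(j, t)` with `1 ≤ t ≤ i j` for each
item `j` of size `i j ≥ 2`; player `(j, t)`'s unique first choice is her cyclic
successor `(j, t+1 mod i j)`.  With all rooms of size `b`, an assignment in which
every player rooms with her first choice exists iff the items can be partitioned
into groups each summing exactly to `b`. -/
theorem first_choice_assignment_iff_bin_packing (n : ℕ) (i : Fin n → ℕ)
    (h2 : ∀ j, 2 ≤ i j) (b : ℕ)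
    (succ : (Σ j : Fin n, Fin (i j)) → Σ j : Fin n, Fin (i j))
    (hsucc : ∀ p, (succ p).1 = p.1 ∧ (((succ p).2 : ℕ)) = (((p.2 : ℕ)) + 1) % i p.1) :
    (∃ (k : ℕ) (A : (Σ j : Fin n, Fin (i j)) → Fin k),
        (∀ g : Fin k, (univ.filter fun p => A p = g).card = b) ∧
        ∀ p, A (succ p) = A p) ↔
    (∃ (m : ℕ) (B : Fin n → Fin m),
        ∀ g : Fin m, ∑ j ∈ univ.filter fun j => B j = g, i j = b) := by
  have hpos : ∀ j, 0 < i j := fun j => lt_of_lt_of_le (by norm_num) (h2 j)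
  constructor
  · rintro ⟨k, A, hcard, hA⟩
    refine ⟨k, fun j => A ⟨j, ⟨0, hpos j⟩⟩, fun g => ?_⟩
    have key : ∀ (j : Fin n) (t : ℕ) (ht : t < i j),
        A ⟨j, ⟨t, ht⟩⟩ = A ⟨j, ⟨0, hpos j⟩⟩ := by
      intro j t
      induction t with
      | zero => intro ht; rfl
      | succ t ih =>
        intro ht
        have hlt : t < i j := Nat.lt_of_succ_lt ht
        have hs : succ ⟨j, ⟨t, hlt⟩⟩ = ⟨j, ⟨t + 1, ht⟩⟩ := by
          apply sigma_eq_of_parts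
          · exact (hsucc ⟨j, ⟨t, hlt⟩⟩).1
          · have := (hsucc ⟨j, ⟨t, hlt⟩⟩).2
            simpa [Nat.mod_eq_of_lt ht] using this
        calc A ⟨j, ⟨t + 1, ht⟩⟩ = A (succ ⟨j, ⟨t, hlt⟩⟩) := by rw [hs]
          _ = A ⟨j, ⟨t, hlt⟩⟩ := hA _
          _ = A ⟨j, ⟨0, hpos j⟩⟩ := ih hlt
    have hAB : ∀ p : Σ j : Fin n, Fin (i j), A p = A ⟨p.1, ⟨0, hpos p.1⟩⟩ := by
      rintro ⟨j, ⟨t, ht⟩⟩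
      exact key j t ht
    rw [← count_sigma i (fun j => A ⟨j, ⟨0, hpos j⟩⟩) g, ← hcard g]
    congr 1
    apply Finset.filter_congr
    intro p _
    rw [hAB p]
  · rintro ⟨m, B, hB⟩
    refine ⟨m, fun p => B p.1, fun g => ?_, fun p => ?_⟩
    · rw [count_sigma i B g]
      exact hB g
    · simp [(hsucc p).1]
end

section
/- Let D be the directed graph obtained from a 3-partite 3-uniform hypergraph H = (U \cup V \cup W, E) by replacing each hyperedge (u,v,w) with the 12-vertex gadget (9 new vertices plus u, v, w) whose arcs form the 'black' triangles covering all 12 vertices and the 'gray' triangles covering only the 9 new vertices. Then D has a directed triangle cover if and only if H has a perfect matching. -/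
/-- Vertices of the digraph built from the 3-partite 3-uniform hypergraph with
hyperedge set `E`: the original vertices together with 9 private gadget vertices
per hyperedge (indexed `0 = v₁, 1 = v₂, 2 = u₁, 3 = u₂, 4 = w₁, 5 = w₂,
6 = a, 7 = b, 8 = c`). -/
abbrev GadgetVertex {U V W : Type*} [DecidableEq U] [DecidableEq V] [DecidableEq W]
    (E : Finset (U × V × W)) : Type _ :=
  (U ⊕ V ⊕ W) ⊕ ({e // e ∈ E} × Fin 9)

/-- The arcs of the gadget digraph: for each hyperedge `(u,v,w)`, the four black
directed triangles `(v,v₁,u₂)`, `(u,u₁,w₂)`, `(v₂,w,w₁)`, `(a,b,c)` covering all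
12 gadget vertices, and the three gray directed triangles `(u₁,u₂,c)`,
`(w₁,w₂,b)`, `(v₁,v₂,a)` covering exactly the 9 private vertices. -/
def GadgetArc {U V W : Type*} [DecidableEq U] [DecidableEq V] [DecidableEq W]
    (E : Finset (U × V × W)) (x y : GadgetVertex E) : Prop :=
  ∃ e : {e // e ∈ E},
    let u : GadgetVertex E := Sum.inl (Sum.inl e.val.1)
    let v : GadgetVertex E := Sum.inl (Sum.inr (Sum.inl e.val.2.1))
    let w : GadgetVertex E := Sum.inl (Sum.inr (Sum.inr e.val.2.2))
    let g : Fin 9 → GadgetVertex E := fun i => Sum.inr (e, i)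
    (x, y) ∈ ([
      -- black triangles
      (v, g 0), (g 0, g 3), (g 3, v),
      (u, g 2), (g 2, g 5), (g 5, u),
      (g 1, w), (w, g 4), (g 4, g 1),
      (g 6, g 7), (g 7, g 8), (g 8, g 6),
      -- gray triangles
      (g 2, g 3), (g 3, g 8), (g 8, g 2),
      (g 4, g 5), (g 5, g 7), (g 7, g 4),
      (g 0, g 1), (g 1, g 6), (g 6, g 0)] : List (GadgetVertex E × GadgetVertex E))

/-- A perfect matching of the 3-partite 3-uniform hypergraph with edge set `E`:
a set of hyperedges covering every vertex of each part exactly once. -/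
def IsPerfectMatching3D {U V W : Type*} (E M : Finset (U × V × W)) : Prop :=
  M ⊆ E ∧
  (∀ u : U, ∃! e, e ∈ M ∧ e.1 = u) ∧
  (∀ v : V, ∃! e, e ∈ M ∧ e.2.1 = v) ∧
  (∀ w : W, ∃! e, e ∈ M ∧ e.2.2 = w)

namespace GadgetPf

variable {U V W : Type*} [DecidableEq U] [DecidableEq V] [DecidableEq W] {E : Finset (U × V × W)}

/-- abbreviations for gadget vertices -/
def gu (e : {e // e ∈ E}) : GadgetVertex E := Sum.inl (Sum.inl e.val.1)
def gv (e : {e // e ∈ E}) : GadgetVertex E := Sum.inl (Sum.inr (Sum.inl e.val.2.1))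
def gw (e : {e // e ∈ E}) : GadgetVertex E := Sum.inl (Sum.inr (Sum.inr e.val.2.2))
def gg (e : {e // e ∈ E}) (i : Fin 9) : GadgetVertex E := Sum.inr (e, i)

instance : DecidableEq (Finset (GadgetVertex E)) := Finset.decidableEq

def B1 (e : {e // e ∈ E}) : Finset (GadgetVertex E) := {gv e, gg e 0, gg e 3}
def B2 (e : {e // e ∈ E}) : Finset (GadgetVertex E) := {gu e, gg e 2, gg e 5}
def B3 (e : {e // e ∈ E}) : Finset (GadgetVertex E) := {gg e 1, gw e, gg e 4}
def B4 (e : {e // e ∈ E}) : Finset (GadgetVertex E) := {gg e 6, gg e 7, gg e 8}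
def G1 (e : {e // e ∈ E}) : Finset (GadgetVertex E) := {gg e 2, gg e 3, gg e 8}
def G2 (e : {e // e ∈ E}) : Finset (GadgetVertex E) := {gg e 4, gg e 5, gg e 7}
def G3 (e : {e // e ∈ E}) : Finset (GadgetVertex E) := {gg e 0, gg e 1, gg e 6}

section Forward
variable {T : Finset (Finset (GadgetVertex E))}

lemma cycle_at (hT : IsDirTriangleCover (GadgetArc E) T) {t : Finset (GadgetVertex E)}
    {x : GadgetVertex E} (ht : t ∈ T) (hx : x ∈ t) :
    ∃ y z, t = {x, y, z} ∧ GadgetArc E x y ∧ GadgetArc E y z ∧ GadgetArc E z x := by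
  obtain ⟨-, a, b, c, rfl, hab, hbc, hca⟩ := hT.1 t ht
  simp only [Finset.mem_insert, Finset.mem_singleton] at hx
  rcases hx with rfl | rfl | rfl
  · exact ⟨b, c, rfl, hab, hbc, hca⟩
  · exact ⟨c, a, by ext; simp; try tauto, hbc, hca, hab⟩
  · exact ⟨a, b, by ext; simp; try tauto, hca, hab, hbc⟩

lemma uniqT (hT : IsDirTriangleCover (GadgetArc E) T) {t1 t2 : Finset (GadgetVertex E)}
    {x : GadgetVertex E} (h1 : t1 ∈ T) (m1 : x ∈ t1) (h2 : t2 ∈ T) (m2 : x ∈ t2) : t1 = t2 :=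
  (hT.2 x).unique ⟨h1, m1⟩ ⟨h2, m2⟩

variable (hT : IsDirTriangleCover (GadgetArc E) T)
include hT

lemma tri_g7 {t : Finset (GadgetVertex E)} (e : {e // e ∈ E}) (ht : t ∈ T)
    (hx : gg e 7 ∈ t) : t = B4 e ∨ t = G2 e := by
  obtain ⟨y, z, rfl, h1, h2, h3⟩ := cycle_at hT ht hx
  obtain ⟨e1, h1⟩ := h1; simp [gg] at h1
  rcases h1 with ⟨rfl, rfl⟩ | ⟨rfl, rfl⟩
  · obtain ⟨e2, h2⟩ := h2; simp at h2
    rcases h2 with ⟨rfl, rfl⟩ | ⟨rfl, rfl⟩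
    · left; ext a; simp [B4, gg]; try tauto
    · obtain ⟨e3, h3⟩ := h3; simp [gg] at h3
  · obtain ⟨e2, h2⟩ := h2; simp at h2
    rcases h2 with ⟨rfl, rfl⟩ | ⟨rfl, rfl⟩
    · obtain ⟨e3, h3⟩ := h3; simp [gg] at h3
    · right; ext a; simp [G2, gg]; try tauto

lemma tri_g8 {t : Finset (GadgetVertex E)} (e : {e // e ∈ E}) (ht : t ∈ T)
    (hx : gg e 8 ∈ t) : t = B4 e ∨ t = G1 e := by
  obtain ⟨y, z, rfl, h1, h2, h3⟩ := cycle_at hT ht hx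
  obtain ⟨e1, h1⟩ := h1; simp [gg] at h1
  rcases h1 with ⟨rfl, rfl⟩ | ⟨rfl, rfl⟩
  · obtain ⟨e2, h2⟩ := h2; simp at h2
    rcases h2 with ⟨rfl, rfl⟩ | ⟨rfl, rfl⟩
    · left; ext a; simp [B4, gg]; try tauto
    · obtain ⟨e3, h3⟩ := h3; simp [gg] at h3
  · obtain ⟨e2, h2⟩ := h2; simp at h2
    rcases h2 with ⟨rfl, rfl⟩ | ⟨rfl, rfl⟩
    · obtain ⟨e3, h3⟩ := h3; simp [gg] at h3
    · right; ext a; simp [G1, gg]; try tauto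

lemma tri_g5 {t : Finset (GadgetVertex E)} (e : {e // e ∈ E}) (ht : t ∈ T)
    (hx : gg e 5 ∈ t) : t = B2 e ∨ t = G2 e := by
  obtain ⟨y, z, rfl, h1, h2, h3⟩ := cycle_at hT ht hx
  obtain ⟨e1, h1⟩ := h1; simp [gg] at h1
  rcases h1 with ⟨rfl, rfl⟩ | ⟨rfl, rfl⟩
  · obtain ⟨e2, h2⟩ := h2; simp at h2
    obtain ⟨he2, rfl⟩ := h2
    obtain ⟨e3, h3⟩ := h3; simp [gg] at h3
    obtain ⟨rfl, rfl⟩ := h3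
    left; ext a; simp [B2, gg, gu]; try tauto
  · obtain ⟨e2, h2⟩ := h2; simp at h2
    rcases h2 with ⟨rfl, rfl⟩ | ⟨rfl, rfl⟩
    · obtain ⟨e3, h3⟩ := h3; simp [gg] at h3
    · right; ext a; simp [G2, gg]; try tauto

lemma tri_g4 {t : Finset (GadgetVertex E)} (e : {e // e ∈ E}) (ht : t ∈ T)
    (hx : gg e 4 ∈ t) : t = B3 e ∨ t = G2 e := by
  obtain ⟨y, z, rfl, h1, h2, h3⟩ := cycle_at hT ht hx
  obtain ⟨e1, h1⟩ := h1; simp [gg] at h1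
  rcases h1 with ⟨rfl, rfl⟩ | ⟨rfl, rfl⟩
  · obtain ⟨e2, h2⟩ := h2; simp at h2
    rcases h2 with ⟨rfl, rfl⟩ | ⟨rfl, rfl⟩
    · left; ext a; simp [B3, gg, gw]; try tauto
    · obtain ⟨e3, h3⟩ := h3; simp [gg] at h3
  · obtain ⟨e2, h2⟩ := h2; simp at h2
    rcases h2 with ⟨rfl, rfl⟩ | ⟨rfl, rfl⟩
    · obtain ⟨e3, h3⟩ := h3; simp [gg] at h3
    · right; ext a; simp [G2, gg]; try tauto

lemma tri_g0 {t : Finset (GadgetVertex E)} (e : {e // e ∈ E}) (ht : t ∈ T)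
    (hx : gg e 0 ∈ t) : t = B1 e ∨ t = G3 e := by
  obtain ⟨y, z, rfl, h1, h2, h3⟩ := cycle_at hT ht hx
  obtain ⟨e1, h1⟩ := h1; simp [gg] at h1
  rcases h1 with ⟨rfl, rfl⟩ | ⟨rfl, rfl⟩
  · obtain ⟨e2, h2⟩ := h2; simp at h2
    rcases h2 with ⟨rfl, rfl⟩ | ⟨rfl, rfl⟩
    · left; ext a; simp [B1, gg, gv]; try tauto
    · obtain ⟨e3, h3⟩ := h3; simp [gg] at h3
  · obtain ⟨e2, h2⟩ := h2; simp at h2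
    rcases h2 with ⟨rfl, rfl⟩ | ⟨rfl, rfl⟩
    · obtain ⟨e3, h3⟩ := h3; simp [gg] at h3
    · right; ext a; simp [G3, gg]; try tauto

lemma tri_u {t : Finset (GadgetVertex E)} (u0 : U) (ht : t ∈ T)
    (hx : (Sum.inl (Sum.inl u0) : GadgetVertex E) ∈ t) :
    ∃ e : {e // e ∈ E}, e.val.1 = u0 ∧ t = B2 e := by
  obtain ⟨y, z, rfl, h1, h2, h3⟩ := cycle_at hT ht hx
  obtain ⟨e1, h1⟩ := h1; simp at h1
  obtain ⟨rfl, rfl⟩ := h1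
  obtain ⟨e2, h2⟩ := h2; simp at h2
  rcases h2 with ⟨rfl, rfl⟩ | ⟨rfl, rfl⟩
  · exact ⟨e1, rfl, by ext a; simp [B2, gg, gu]; try tauto⟩
  · obtain ⟨e3, h3⟩ := h3; simp [gg] at h3

lemma tri_v {t : Finset (GadgetVertex E)} (v0 : V) (ht : t ∈ T)
    (hx : (Sum.inl (Sum.inr (Sum.inl v0)) : GadgetVertex E) ∈ t) :
    ∃ e : {e // e ∈ E}, e.val.2.1 = v0 ∧ t = B1 e := by
  obtain ⟨y, z, rfl, h1, h2, h3⟩ := cycle_at hT ht hx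
  obtain ⟨e1, h1⟩ := h1; simp at h1
  obtain ⟨rfl, rfl⟩ := h1
  obtain ⟨e2, h2⟩ := h2; simp at h2
  rcases h2 with ⟨rfl, rfl⟩ | ⟨rfl, rfl⟩
  · exact ⟨e1, rfl, by ext a; simp [B1, gg, gv]; try tauto⟩
  · obtain ⟨e3, h3⟩ := h3; simp [gg] at h3

lemma tri_w {t : Finset (GadgetVertex E)} (w0 : W) (ht : t ∈ T)
    (hx : (Sum.inl (Sum.inr (Sum.inr w0)) : GadgetVertex E) ∈ t) :
    ∃ e : {e // e ∈ E}, e.val.2.2 = w0 ∧ t = B3 e := by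
  obtain ⟨y, z, rfl, h1, h2, h3⟩ := cycle_at hT ht hx
  obtain ⟨e1, h1⟩ := h1; simp at h1
  obtain ⟨rfl, rfl⟩ := h1
  obtain ⟨e2, h2⟩ := h2; simp at h2
  rcases h2 with ⟨rfl, rfl⟩ | ⟨rfl, rfl⟩
  · exact ⟨e1, rfl, by ext a; simp [B3, gg, gw]; try tauto⟩
  · obtain ⟨e3, h3⟩ := h3; simp [gg] at h3

/-- if one of the black triangles B1/B2/B3 is used, then B4 is used. -/
lemma B4_of_B2 (e : {e // e ∈ E}) (h : B2 e ∈ T) : B4 e ∈ T := by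
  obtain ⟨t7, ⟨ht7, hm7⟩, -⟩ := hT.2 (gg e 7)
  rcases tri_g7 hT e ht7 hm7 with rfl | rfl
  · exact ht7
  · exfalso
    have h5 : gg e 5 ∈ G2 e := by simp [G2, gg]
    have h5' : gg e 5 ∈ B2 e := by simp [B2, gg]
    have heq := uniqT hT h h5' ht7 h5
    have hmem : gu e ∈ B2 e := by simp [B2, gg, gu]
    rw [heq] at hmem
    simp [G2, gg, gu] at hmem

lemma B4_of_B1 (e : {e // e ∈ E}) (h : B1 e ∈ T) : B4 e ∈ T := by
  obtain ⟨t8, ⟨ht8, hm8⟩, -⟩ := hT.2 (gg e 8)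
  rcases tri_g8 hT e ht8 hm8 with rfl | rfl
  · exact ht8
  · exfalso
    have h3 : gg e 3 ∈ G1 e := by simp [G1, gg]
    have h3' : gg e 3 ∈ B1 e := by simp [B1, gg]
    have heq := uniqT hT h h3' ht8 h3
    have hmem : gv e ∈ B1 e := by simp [B1, gg, gv]
    rw [heq] at hmem
    simp [G1, gg, gv] at hmem

lemma B4_of_B3 (e : {e // e ∈ E}) (h : B3 e ∈ T) : B4 e ∈ T := by
  obtain ⟨t7, ⟨ht7, hm7⟩, -⟩ := hT.2 (gg e 7)
  rcases tri_g7 hT e ht7 hm7 with rfl | rfl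
  · exact ht7
  · exfalso
    have h4 : gg e 4 ∈ G2 e := by simp [G2, gg]
    have h4' : gg e 4 ∈ B3 e := by simp [B3, gg]
    have heq := uniqT hT h h4' ht7 h4
    have hmem : gw e ∈ B3 e := by simp [B3, gg, gw]
    rw [heq] at hmem
    simp [G2, gg, gw] at hmem

lemma B2_of_B4 (e : {e // e ∈ E}) (h : B4 e ∈ T) : B2 e ∈ T := by
  obtain ⟨t5, ⟨ht5, hm5⟩, -⟩ := hT.2 (gg e 5)
  rcases tri_g5 hT e ht5 hm5 with rfl | rfl
  · exact ht5
  · exfalso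
    have h7 : gg e 7 ∈ G2 e := by simp [G2, gg]
    have h7' : gg e 7 ∈ B4 e := by simp [B4, gg]
    have heq := uniqT hT h h7' ht5 h7
    have hmem : gg e 6 ∈ B4 e := by simp [B4, gg]
    rw [heq] at hmem
    simp [G2, gg] at hmem

lemma B1_of_B4 (e : {e // e ∈ E}) (h : B4 e ∈ T) : B1 e ∈ T := by
  obtain ⟨t0, ⟨ht0, hm0⟩, -⟩ := hT.2 (gg e 0)
  rcases tri_g0 hT e ht0 hm0 with rfl | rfl
  · exact ht0
  · exfalso
    have h6 : gg e 6 ∈ G3 e := by simp [G3, gg]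
    have h6' : gg e 6 ∈ B4 e := by simp [B4, gg]
    have heq := uniqT hT h h6' ht0 h6
    have hmem : gg e 7 ∈ B4 e := by simp [B4, gg]
    rw [heq] at hmem
    simp [G3, gg] at hmem

lemma B3_of_B4 (e : {e // e ∈ E}) (h : B4 e ∈ T) : B3 e ∈ T := by
  obtain ⟨t4, ⟨ht4, hm4⟩, -⟩ := hT.2 (gg e 4)
  rcases tri_g4 hT e ht4 hm4 with rfl | rfl
  · exact ht4
  · exfalso
    have h7 : gg e 7 ∈ G2 e := by simp [G2, gg]
    have h7' : gg e 7 ∈ B4 e := by simp [B4, gg]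
    have heq := uniqT hT h h7' ht4 h7
    have hmem : gg e 8 ∈ B4 e := by simp [B4, gg]
    rw [heq] at hmem
    simp [G2, gg] at hmem

end Forward

section Backward

variable (M : Finset (U × V × W))

/-- The triangle cover obtained from a perfect matching. -/
def coverOf : Finset (Finset (GadgetVertex E)) :=
  Finset.univ.biUnion (fun e : {e // e ∈ E} =>
    if e.val ∈ M then {B1 e, B2 e, B3 e, B4 e} else {G1 e, G2 e, G3 e})

lemma mem_coverOf {t : Finset (GadgetVertex E)} :
    t ∈ coverOf (E := E) M ↔ ∃ e : {e // e ∈ E},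
      (e.val ∈ M ∧ (t = B1 e ∨ t = B2 e ∨ t = B3 e ∨ t = B4 e)) ∨
      (e.val ∉ M ∧ (t = G1 e ∨ t = G2 e ∨ t = G3 e)) := by
  simp only [coverOf, Finset.mem_biUnion, Finset.mem_univ, true_and]
  refine exists_congr fun e => ?_
  by_cases he : e.val ∈ M <;> simp [he]

end Backward

set_option maxHeartbeats 2000000 in
lemma coverOf_isCover {M : Finset (U × V × W)} (hM : IsPerfectMatching3D E M) :
    IsDirTriangleCover (GadgetArc E) (coverOf (E := E) M) := by
  constructor
  · intro t ht
    rw [mem_coverOf] at ht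
    obtain ⟨e, h⟩ := ht
    rcases h with ⟨hm, rfl|rfl|rfl|rfl⟩ | ⟨hm, rfl|rfl|rfl⟩ <;>
      exact ⟨Finset.card_eq_three.mpr
          ⟨_, _, _, by simp [B1,B2,B3,B4,G1,G2,G3,gu,gv,gw,gg],
            by simp [B1,B2,B3,B4,G1,G2,G3,gu,gv,gw,gg],
            by simp [B1,B2,B3,B4,G1,G2,G3,gu,gv,gw,gg], rfl⟩,
        _, _, _, rfl, ⟨e, by simp [gu,gv,gw,gg]⟩, ⟨e, by simp [gu,gv,gw,gg]⟩,
        ⟨e, by simp [gu,gv,gw,gg]⟩⟩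
  · rintro ((u0 | v0 | w0) | ⟨e0, i⟩)
    · obtain ⟨a, ⟨haM, hau⟩, hauniq⟩ := hM.2.1 u0
      set e : {e // e ∈ E} := ⟨a, hM.1 haM⟩ with he_def
      refine ⟨B2 e, ⟨(mem_coverOf M).mpr ⟨e, Or.inl ⟨haM, by tauto⟩⟩, ?_⟩, ?_⟩
      · simp [B2, gu, gg, he_def, hau]
      · rintro t' ⟨ht', hx'⟩
        rw [mem_coverOf] at ht'
        obtain ⟨e', h'⟩ := ht'
        rcases h' with ⟨hm', rfl|rfl|rfl|rfl⟩ | ⟨hm', rfl|rfl|rfl⟩ <;>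
          simp [B1, B2, B3, B4, G1, G2, G3, gu, gv, gw, gg] at hx'
        have : e'.val = a := hauniq e'.val ⟨hm', hx'.symm⟩
        have he' : e' = e := Subtype.ext (by rw [this, he_def])
        rw [he']
    · obtain ⟨a, ⟨haM, hav⟩, hauniq⟩ := hM.2.2.1 v0
      set e : {e // e ∈ E} := ⟨a, hM.1 haM⟩ with he_def
      refine ⟨B1 e, ⟨(mem_coverOf M).mpr ⟨e, Or.inl ⟨haM, by tauto⟩⟩, ?_⟩, ?_⟩
      · simp [B1, gv, gg, he_def, hav]
      · rintro t' ⟨ht', hx'⟩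
        rw [mem_coverOf] at ht'
        obtain ⟨e', h'⟩ := ht'
        rcases h' with ⟨hm', rfl|rfl|rfl|rfl⟩ | ⟨hm', rfl|rfl|rfl⟩ <;>
          simp [B1, B2, B3, B4, G1, G2, G3, gu, gv, gw, gg] at hx'
        have : e'.val = a := hauniq e'.val ⟨hm', hx'.symm⟩
        have he' : e' = e := Subtype.ext (by rw [this, he_def])
        rw [he']
    · obtain ⟨a, ⟨haM, haw⟩, hauniq⟩ := hM.2.2.2 w0
      set e : {e // e ∈ E} := ⟨a, hM.1 haM⟩ with he_def
      refine ⟨B3 e, ⟨(mem_coverOf M).mpr ⟨e, Or.inl ⟨haM, by tauto⟩⟩, ?_⟩, ?_⟩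
      · simp [B3, gw, gg, he_def, haw]
      · rintro t' ⟨ht', hx'⟩
        rw [mem_coverOf] at ht'
        obtain ⟨e', h'⟩ := ht'
        rcases h' with ⟨hm', rfl|rfl|rfl|rfl⟩ | ⟨hm', rfl|rfl|rfl⟩ <;>
          simp [B1, B2, B3, B4, G1, G2, G3, gu, gv, gw, gg] at hx'
        have : e'.val = a := hauniq e'.val ⟨hm', hx'.symm⟩
        have he' : e' = e := Subtype.ext (by rw [this, he_def])
        rw [he']
    · by_cases hm : e0.val ∈ M
      · fin_cases i
        · refine ⟨B1 e0, ⟨(mem_coverOf M).mpr ⟨e0, Or.inl ⟨hm, Or.inl rfl⟩⟩,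
            by simp [B1, gv, gg]⟩, ?_⟩
          rintro t' ⟨ht', hx'⟩
          rw [mem_coverOf] at ht'
          obtain ⟨e', h'⟩ := ht'
          rcases h' with ⟨hm', rfl|rfl|rfl|rfl⟩ | ⟨hm', rfl|rfl|rfl⟩ <;>
            simp [B1, B2, B3, B4, G1, G2, G3, gu, gv, gw, gg] at hx' <;>
            subst hx' <;> first | rfl | exact absurd hm' hm | exact absurd hm hm'
        · refine ⟨B3 e0, ⟨(mem_coverOf M).mpr ⟨e0, Or.inl ⟨hm, Or.inr (Or.inr (Or.inl rfl))⟩⟩,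
            by simp [B3, gw, gg]⟩, ?_⟩
          rintro t' ⟨ht', hx'⟩
          rw [mem_coverOf] at ht'
          obtain ⟨e', h'⟩ := ht'
          rcases h' with ⟨hm', rfl|rfl|rfl|rfl⟩ | ⟨hm', rfl|rfl|rfl⟩ <;>
            simp [B1, B2, B3, B4, G1, G2, G3, gu, gv, gw, gg] at hx' <;>
            subst hx' <;> first | rfl | exact absurd hm' hm | exact absurd hm hm'
        · refine ⟨B2 e0, ⟨(mem_coverOf M).mpr ⟨e0, Or.inl ⟨hm, Or.inr (Or.inl rfl)⟩⟩,
            by simp [B2, gu, gg]⟩, ?_⟩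
          rintro t' ⟨ht', hx'⟩
          rw [mem_coverOf] at ht'
          obtain ⟨e', h'⟩ := ht'
          rcases h' with ⟨hm', rfl|rfl|rfl|rfl⟩ | ⟨hm', rfl|rfl|rfl⟩ <;>
            simp [B1, B2, B3, B4, G1, G2, G3, gu, gv, gw, gg] at hx' <;>
            subst hx' <;> first | rfl | exact absurd hm' hm | exact absurd hm hm'
        · refine ⟨B1 e0, ⟨(mem_coverOf M).mpr ⟨e0, Or.inl ⟨hm, Or.inl rfl⟩⟩,
            by simp [B1, gv, gg]⟩, ?_⟩
          rintro t' ⟨ht', hx'⟩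
          rw [mem_coverOf] at ht'
          obtain ⟨e', h'⟩ := ht'
          rcases h' with ⟨hm', rfl|rfl|rfl|rfl⟩ | ⟨hm', rfl|rfl|rfl⟩ <;>
            simp [B1, B2, B3, B4, G1, G2, G3, gu, gv, gw, gg] at hx' <;>
            subst hx' <;> first | rfl | exact absurd hm' hm | exact absurd hm hm'
        · refine ⟨B3 e0, ⟨(mem_coverOf M).mpr ⟨e0, Or.inl ⟨hm, Or.inr (Or.inr (Or.inl rfl))⟩⟩,
            by simp [B3, gw, gg]⟩, ?_⟩
          rintro t' ⟨ht', hx'⟩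
          rw [mem_coverOf] at ht'
          obtain ⟨e', h'⟩ := ht'
          rcases h' with ⟨hm', rfl|rfl|rfl|rfl⟩ | ⟨hm', rfl|rfl|rfl⟩ <;>
            simp [B1, B2, B3, B4, G1, G2, G3, gu, gv, gw, gg] at hx' <;>
            subst hx' <;> first | rfl | exact absurd hm' hm | exact absurd hm hm'
        · refine ⟨B2 e0, ⟨(mem_coverOf M).mpr ⟨e0, Or.inl ⟨hm, Or.inr (Or.inl rfl)⟩⟩,
            by simp [B2, gu, gg]⟩, ?_⟩
          rintro t' ⟨ht', hx'⟩
          rw [mem_coverOf] at ht'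
          obtain ⟨e', h'⟩ := ht'
          rcases h' with ⟨hm', rfl|rfl|rfl|rfl⟩ | ⟨hm', rfl|rfl|rfl⟩ <;>
            simp [B1, B2, B3, B4, G1, G2, G3, gu, gv, gw, gg] at hx' <;>
            subst hx' <;> first | rfl | exact absurd hm' hm | exact absurd hm hm'
        · refine ⟨B4 e0, ⟨(mem_coverOf M).mpr ⟨e0, Or.inl ⟨hm, Or.inr (Or.inr (Or.inr rfl))⟩⟩,
            by simp [B4, gg]⟩, ?_⟩
          rintro t' ⟨ht', hx'⟩
          rw [mem_coverOf] at ht'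
          obtain ⟨e', h'⟩ := ht'
          rcases h' with ⟨hm', rfl|rfl|rfl|rfl⟩ | ⟨hm', rfl|rfl|rfl⟩ <;>
            simp [B1, B2, B3, B4, G1, G2, G3, gu, gv, gw, gg] at hx' <;>
            subst hx' <;> first | rfl | exact absurd hm' hm | exact absurd hm hm'
        · refine ⟨B4 e0, ⟨(mem_coverOf M).mpr ⟨e0, Or.inl ⟨hm, Or.inr (Or.inr (Or.inr rfl))⟩⟩,
            by simp [B4, gg]⟩, ?_⟩
          rintro t' ⟨ht', hx'⟩
          rw [mem_coverOf] at ht'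
          obtain ⟨e', h'⟩ := ht'
          rcases h' with ⟨hm', rfl|rfl|rfl|rfl⟩ | ⟨hm', rfl|rfl|rfl⟩ <;>
            simp [B1, B2, B3, B4, G1, G2, G3, gu, gv, gw, gg] at hx' <;>
            subst hx' <;> first | rfl | exact absurd hm' hm | exact absurd hm hm'
        · refine ⟨B4 e0, ⟨(mem_coverOf M).mpr ⟨e0, Or.inl ⟨hm, Or.inr (Or.inr (Or.inr rfl))⟩⟩,
            by simp [B4, gg]⟩, ?_⟩
          rintro t' ⟨ht', hx'⟩
          rw [mem_coverOf] at ht'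
          obtain ⟨e', h'⟩ := ht'
          rcases h' with ⟨hm', rfl|rfl|rfl|rfl⟩ | ⟨hm', rfl|rfl|rfl⟩ <;>
            simp [B1, B2, B3, B4, G1, G2, G3, gu, gv, gw, gg] at hx' <;>
            subst hx' <;> first | rfl | exact absurd hm' hm | exact absurd hm hm'
      · fin_cases i
        · refine ⟨G3 e0, ⟨(mem_coverOf M).mpr ⟨e0, Or.inr ⟨hm, Or.inr (Or.inr rfl)⟩⟩,
            by simp [G3, gg]⟩, ?_⟩
          rintro t' ⟨ht', hx'⟩
          rw [mem_coverOf] at ht'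
          obtain ⟨e', h'⟩ := ht'
          rcases h' with ⟨hm', rfl|rfl|rfl|rfl⟩ | ⟨hm', rfl|rfl|rfl⟩ <;>
            simp [B1, B2, B3, B4, G1, G2, G3, gu, gv, gw, gg] at hx' <;>
            subst hx' <;> first | rfl | exact absurd hm' hm | exact absurd hm hm'
        · refine ⟨G3 e0, ⟨(mem_coverOf M).mpr ⟨e0, Or.inr ⟨hm, Or.inr (Or.inr rfl)⟩⟩,
            by simp [G3, gg]⟩, ?_⟩
          rintro t' ⟨ht', hx'⟩
          rw [mem_coverOf] at ht'
          obtain ⟨e', h'⟩ := ht'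
          rcases h' with ⟨hm', rfl|rfl|rfl|rfl⟩ | ⟨hm', rfl|rfl|rfl⟩ <;>
            simp [B1, B2, B3, B4, G1, G2, G3, gu, gv, gw, gg] at hx' <;>
            subst hx' <;> first | rfl | exact absurd hm' hm | exact absurd hm hm'
        · refine ⟨G1 e0, ⟨(mem_coverOf M).mpr ⟨e0, Or.inr ⟨hm, Or.inl rfl⟩⟩,
            by simp [G1, gg]⟩, ?_⟩
          rintro t' ⟨ht', hx'⟩
          rw [mem_coverOf] at ht'
          obtain ⟨e', h'⟩ := ht'
          rcases h' with ⟨hm', rfl|rfl|rfl|rfl⟩ | ⟨hm', rfl|rfl|rfl⟩ <;>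
            simp [B1, B2, B3, B4, G1, G2, G3, gu, gv, gw, gg] at hx' <;>
            subst hx' <;> first | rfl | exact absurd hm' hm | exact absurd hm hm'
        · refine ⟨G1 e0, ⟨(mem_coverOf M).mpr ⟨e0, Or.inr ⟨hm, Or.inl rfl⟩⟩,
            by simp [G1, gg]⟩, ?_⟩
          rintro t' ⟨ht', hx'⟩
          rw [mem_coverOf] at ht'
          obtain ⟨e', h'⟩ := ht'
          rcases h' with ⟨hm', rfl|rfl|rfl|rfl⟩ | ⟨hm', rfl|rfl|rfl⟩ <;>
            simp [B1, B2, B3, B4, G1, G2, G3, gu, gv, gw, gg] at hx' <;>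
            subst hx' <;> first | rfl | exact absurd hm' hm | exact absurd hm hm'
        · refine ⟨G2 e0, ⟨(mem_coverOf M).mpr ⟨e0, Or.inr ⟨hm, Or.inr (Or.inl rfl)⟩⟩,
            by simp [G2, gg]⟩, ?_⟩
          rintro t' ⟨ht', hx'⟩
          rw [mem_coverOf] at ht'
          obtain ⟨e', h'⟩ := ht'
          rcases h' with ⟨hm', rfl|rfl|rfl|rfl⟩ | ⟨hm', rfl|rfl|rfl⟩ <;>
            simp [B1, B2, B3, B4, G1, G2, G3, gu, gv, gw, gg] at hx' <;>
            subst hx' <;> first | rfl | exact absurd hm' hm | exact absurd hm hm'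
        · refine ⟨G2 e0, ⟨(mem_coverOf M).mpr ⟨e0, Or.inr ⟨hm, Or.inr (Or.inl rfl)⟩⟩,
            by simp [G2, gg]⟩, ?_⟩
          rintro t' ⟨ht', hx'⟩
          rw [mem_coverOf] at ht'
          obtain ⟨e', h'⟩ := ht'
          rcases h' with ⟨hm', rfl|rfl|rfl|rfl⟩ | ⟨hm', rfl|rfl|rfl⟩ <;>
            simp [B1, B2, B3, B4, G1, G2, G3, gu, gv, gw, gg] at hx' <;>
            subst hx' <;> first | rfl | exact absurd hm' hm | exact absurd hm hm'
        · refine ⟨G3 e0, ⟨(mem_coverOf M).mpr ⟨e0, Or.inr ⟨hm, Or.inr (Or.inr rfl)⟩⟩,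
            by simp [G3, gg]⟩, ?_⟩
          rintro t' ⟨ht', hx'⟩
          rw [mem_coverOf] at ht'
          obtain ⟨e', h'⟩ := ht'
          rcases h' with ⟨hm', rfl|rfl|rfl|rfl⟩ | ⟨hm', rfl|rfl|rfl⟩ <;>
            simp [B1, B2, B3, B4, G1, G2, G3, gu, gv, gw, gg] at hx' <;>
            subst hx' <;> first | rfl | exact absurd hm' hm | exact absurd hm hm'
        · refine ⟨G2 e0, ⟨(mem_coverOf M).mpr ⟨e0, Or.inr ⟨hm, Or.inr (Or.inl rfl)⟩⟩,
            by simp [G2, gg]⟩, ?_⟩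
          rintro t' ⟨ht', hx'⟩
          rw [mem_coverOf] at ht'
          obtain ⟨e', h'⟩ := ht'
          rcases h' with ⟨hm', rfl|rfl|rfl|rfl⟩ | ⟨hm', rfl|rfl|rfl⟩ <;>
            simp [B1, B2, B3, B4, G1, G2, G3, gu, gv, gw, gg] at hx' <;>
            subst hx' <;> first | rfl | exact absurd hm' hm | exact absurd hm hm'
        · refine ⟨G1 e0, ⟨(mem_coverOf M).mpr ⟨e0, Or.inr ⟨hm, Or.inl rfl⟩⟩,
            by simp [G1, gg]⟩, ?_⟩
          rintro t' ⟨ht', hx'⟩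
          rw [mem_coverOf] at ht'
          obtain ⟨e', h'⟩ := ht'
          rcases h' with ⟨hm', rfl|rfl|rfl|rfl⟩ | ⟨hm', rfl|rfl|rfl⟩ <;>
            simp [B1, B2, B3, B4, G1, G2, G3, gu, gv, gw, gg] at hx' <;>
            subst hx' <;> first | rfl | exact absurd hm' hm | exact absurd hm hm'

end GadgetPf

open GadgetPf

/-- The gadget digraph obtained from a 3-partite 3-uniform hypergraph has a
directed triangle cover iff the hypergraph has a perfect matching. -/
theorem gadget_dir_triangle_cover_iff_perfect_matching
    {U V W : Type*} [Fintype U] [Fintype V] [Fintype W]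
    [DecidableEq U] [DecidableEq V] [DecidableEq W]
    (E : Finset (U × V × W)) :
    (∃ T : Finset (Finset (GadgetVertex E)),
        IsDirTriangleCover (GadgetArc E) T) ↔
    ∃ M : Finset (U × V × W), IsPerfectMatching3D E M := by
  classical
  constructor
  · rintro ⟨T, hT⟩
    set M := (E.attach.filter fun e => B4 e ∈ T).image Subtype.val with hMdef
    have hmemM : ∀ a : U × V × W, a ∈ M ↔ ∃ e : {e // e ∈ E}, B4 e ∈ T ∧ e.val = a := by
      intro a
      constructor
      · intro ha
        rw [hMdef, Finset.mem_image] at ha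
        obtain ⟨e, he, rfl⟩ := ha
        rw [Finset.mem_filter] at he
        exact ⟨e, he.2, rfl⟩
      · rintro ⟨e, hB4, rfl⟩
        exact Finset.mem_image_of_mem _ (Finset.mem_filter.mpr ⟨Finset.mem_attach _ _, hB4⟩)
    refine ⟨M, ?_, ?_, ?_, ?_⟩
    · intro a ha
      obtain ⟨e, -, rfl⟩ := (hmemM a).1 ha
      exact e.2
    · intro u0
      obtain ⟨t, ⟨ht, hxt⟩, -⟩ := hT.2 (Sum.inl (Sum.inl u0))
      obtain ⟨e, he1, rfl⟩ := tri_u hT u0 ht hxt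
      refine ⟨e.val, ⟨(hmemM _).2 ⟨e, B4_of_B2 hT e ht, rfl⟩, he1⟩, ?_⟩
      rintro a ⟨haM, ha1⟩
      obtain ⟨e', hB4', rfl⟩ := (hmemM a).1 haM
      have hB2' : B2 e' ∈ T := B2_of_B4 hT e' hB4'
      have hgu : gu e' = (Sum.inl (Sum.inl u0) : GadgetVertex E) := by simp [gu, ha1]
      have hx' : (Sum.inl (Sum.inl u0) : GadgetVertex E) ∈ B2 e' := by
        rw [← hgu]; simp [B2]
      have heq := uniqT hT hB2' hx' ht hxt
      have h2 : gg e' 2 ∈ B2 e := by rw [← heq]; simp [B2, gg]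
      simp [B2, gg, gu] at h2
      rw [h2]
    · intro v0
      obtain ⟨t, ⟨ht, hxt⟩, -⟩ := hT.2 (Sum.inl (Sum.inr (Sum.inl v0)))
      obtain ⟨e, he1, rfl⟩ := tri_v hT v0 ht hxt
      refine ⟨e.val, ⟨(hmemM _).2 ⟨e, B4_of_B1 hT e ht, rfl⟩, he1⟩, ?_⟩
      rintro a ⟨haM, ha1⟩
      obtain ⟨e', hB4', rfl⟩ := (hmemM a).1 haM
      have hB1' : B1 e' ∈ T := B1_of_B4 hT e' hB4'
      have hgv : gv e' = (Sum.inl (Sum.inr (Sum.inl v0)) : GadgetVertex E) := by simp [gv, ha1]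
      have hx' : (Sum.inl (Sum.inr (Sum.inl v0)) : GadgetVertex E) ∈ B1 e' := by
        rw [← hgv]; simp [B1]
      have heq := uniqT hT hB1' hx' ht hxt
      have h2 : gg e' 0 ∈ B1 e := by rw [← heq]; simp [B1, gg]
      simp [B1, gg, gv] at h2
      rw [h2]
    · intro w0
      obtain ⟨t, ⟨ht, hxt⟩, -⟩ := hT.2 (Sum.inl (Sum.inr (Sum.inr w0)))
      obtain ⟨e, he1, rfl⟩ := tri_w hT w0 ht hxt
      refine ⟨e.val, ⟨(hmemM _).2 ⟨e, B4_of_B3 hT e ht, rfl⟩, he1⟩, ?_⟩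
      rintro a ⟨haM, ha1⟩
      obtain ⟨e', hB4', rfl⟩ := (hmemM a).1 haM
      have hB3' : B3 e' ∈ T := B3_of_B4 hT e' hB4'
      have hgw : gw e' = (Sum.inl (Sum.inr (Sum.inr w0)) : GadgetVertex E) := by simp [gw, ha1]
      have hx' : (Sum.inl (Sum.inr (Sum.inr w0)) : GadgetVertex E) ∈ B3 e' := by
        rw [← hgw]; simp [B3]
      have heq := uniqT hT hB3' hx' ht hxt
      have h2 : gg e' 1 ∈ B3 e := by rw [← heq]; simp [B3, gg]
      simp [B3, gg, gw] at h2
      rw [h2]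
  · rintro ⟨M, hM⟩
    exact ⟨coverOf (E := E) M, coverOf_isCover hM⟩
end

section
/- In an instance with strict complete preferences, rooms of size 3, best-roommate comparison, the serial dictatorship procedure (each dictator in turn forms a fixed pair with her most-preferred available player, pairs are merged into rooms of size 3, subject to room-count constraints) produces a feasible assignment, i.e., a partition of all players into rooms of size exactly 3. -/
open Finset

attribute [local instance] Classical.propDecidable

noncomputable section

variable {P : Type*} [Fintype P] [DecidableEq P]

/-- The number of roommates already fixed together with player `i` in the partial
assignment `f` (0 if `i` is not yet assigned to a room). -/
def roommateCount {k : ℕ} (f : P → Option (Fin k)) (i : P) : ℕ :=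
  if f i = none then 0 else (univ.filter fun p => p ≠ i ∧ f p = f i).card

/-- The number of rooms already opened in the partial assignment `f`. -/
def openCount {k : ℕ} (f : P → Option (Fin k)) : ℕ :=
  (univ.filter fun j : Fin k => ∃ p, f p = some j).card

/-- Player `j` is available to dictator `i` in the partial assignment `f`:
(1) the number of roommates already fixed with `i` or `j` is at most one in
total, or `i` and `j` already share a room; and (2) if no further room can be
opened, `j` must already be assigned to a room. -/
def Available {k : ℕ} (f : P → Option (Fin k)) (i j : P) : Prop :=
  j ≠ i ∧
  (roommateCount f i + roommateCount f j ≤ 1 ∨ (f i ≠ none ∧ f i = f j)) ∧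
  (openCount f = k → f j ≠ none)

/-- A not-yet-opened room, if one exists. -/
def freshRoom {k : ℕ} (f : P → Option (Fin k)) : Option (Fin k) :=
  if h : (univ.filter fun j : Fin k => ∀ p, f p ≠ some j).Nonempty then some h.choose
  else none

/-- One round of serial dictatorship (best-roommate version, rooms of size 3):
dictator `i` points at her most-preferred available player `j` and the pair is
fixed: if one of them is already in a room the other joins her, otherwise a new
room is opened for the pair. -/
def sdStep {k : ℕ} (rk : P → P → ℕ) (f : P → Option (Fin k)) (i : P) :
    P → Option (Fin k) :=
  let S : Finset P := univ.filter fun j => Available f i j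
  if hS : S.Nonempty then
    let j : P := (Finset.exists_min_image S (rk i) hS).choose
    match f i, f j with
    | some t, _ => fun p => if p = j then some t else f p
    | none, some t => fun p => if p = i then some t else f p
    | none, none =>
        match freshRoom f with
        | some t => fun p => if p = i ∨ p = j then some t else f p
        | none => f
  else f

/-- The outcome of serial dictatorship processing the dictators in the order
given by `order`, starting from the empty assignment. -/
def sdRun {k : ℕ} (rk : P → P → ℕ) (order : List P) : P → Option (Fin k) :=
  order.foldl (sdStep rk) fun _ => none

/-!
At every stage each room holds at most three players: a player joins an occupied room only when
condition (1) says that room has at most two occupants, and a new room is opened only for a pair.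
Assigned players stay assigned, and a dictator who is still unassigned on her turn always has an
available partner: while a room is closed, at least three players are unassigned; once all rooms
are open, her being unassigned leaves some room with at most two occupants. If her partner is
unassigned too, condition (2) guarantees that a closed room exists. So at the end all `3k`
players sit in the `k` rooms of capacity three, which are therefore full.
-/

section SerialDictatorship

variable {k : ℕ}

def moveTo (f : P → Option (Fin k)) (s : Finset P) (t : Fin k) : P → Option (Fin k) :=
  fun p => if p ∈ s then some t else f p

def occupants (f : P → Option (Fin k)) (t : Fin k) : Finset P :=
  univ.filter fun p => f p = some t

def RoomsWithinCapacity (f : P → Option (Fin k)) : Prop :=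
  ∀ t, #(occupants f t) ≤ 3

@[simp]
lemma mem_occupants {f : P → Option (Fin k)} {t : Fin k} {p : P} :
    p ∈ occupants f t ↔ f p = some t := by
  simp [occupants]

lemma moveTo_of_mem {f : P → Option (Fin k)} {s : Finset P} {t : Fin k} {p : P} (hp : p ∈ s) :
    moveTo f s t p = some t :=
  if_pos hp

lemma moveTo_ne_none {f : P → Option (Fin k)} {s : Finset P} {t : Fin k} {p : P}
    (hp : f p ≠ none) : moveTo f s t p ≠ none := by
  unfold moveTo
  split_ifs <;> simp [hp]

lemma occupants_moveTo_self (f : P → Option (Fin k)) (s : Finset P) (t : Fin k) :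
    occupants (moveTo f s t) t = s ∪ occupants f t := by
  ext p
  by_cases hp : p ∈ s <;> simp [moveTo, hp]

lemma occupants_moveTo_subset_of_ne (f : P → Option (Fin k)) (s : Finset P) {t t' : Fin k}
    (ht : t' ≠ t) : occupants (moveTo f s t) t' ⊆ occupants f t' := by
  intro p
  by_cases hp : p ∈ s <;> simp [moveTo, hp, Ne.symm ht]

lemma roomsWithinCapacity_moveTo {f : P → Option (Fin k)} (hf : RoomsWithinCapacity f)
    {s : Finset P} {t : Fin k} (hs : #(s ∪ occupants f t) ≤ 3) :
    RoomsWithinCapacity (moveTo f s t) := by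
  intro t'
  by_cases ht : t' = t
  · rw [ht, occupants_moveTo_self]
    exact hs
  · exact (card_le_card (occupants_moveTo_subset_of_ne f s ht)).trans (hf t')

lemma roommateCount_of_eq_none {f : P → Option (Fin k)} {i : P} (hi : f i = none) :
    roommateCount f i = 0 :=
  if_pos hi

lemma roommateCount_add_one {f : P → Option (Fin k)} {i : P} {t : Fin k} (hi : f i = some t) :
    roommateCount f i + 1 = #(occupants f t) := by
  have hocc : occupants f t = insert i (univ.filter fun p => p ≠ i ∧ f p = f i) := by
    ext p
    by_cases hp : p = i <;> simp [hp, hi]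
  rw [roommateCount, if_neg (by simp [hi]), hocc, card_insert_of_notMem (by simp)]

lemma card_occupants_le_two_of_available {f : P → Option (Fin k)} {i j : P} {t : Fin k}
    (hij : Available f i j) (hne : f i ≠ f j) (ht : f i = some t ∨ f j = some t) :
    #(occupants f t) ≤ 2 := by
  have hsum : roommateCount f i + roommateCount f j ≤ 1 :=
    hij.2.1.resolve_right fun h => hne h.2
  rcases ht with ht | ht
  · have := roommateCount_add_one ht
    omega
  · have := roommateCount_add_one ht
    omega

lemma freshRoom_eq_some {f : P → Option (Fin k)} {t : Fin k} (h : freshRoom f = some t)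
    (p : P) : f p ≠ some t := by
  unfold freshRoom at h
  split at h
  · next hne =>
      rw [← Option.some.inj h]
      exact (mem_filter.mp hne.choose_spec).2 p
  · simp at h

lemma openCount_le (f : P → Option (Fin k)) : openCount f ≤ k :=
  (card_filter_le _ _).trans_eq (card_fin k)

lemma openCount_eq_of_freshRoom_eq_none {f : P → Option (Fin k)} (h : freshRoom f = none) :
    openCount f = k := by
  unfold freshRoom at h
  split at h
  · simp at h
  · next hclosed =>
      have hopen : ∀ t : Fin k, ∃ p, f p = some t := by
        intro t
        by_contra! ht
        exact hclosed ⟨t, mem_filter.mpr ⟨mem_univ t, ht⟩⟩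
      rw [openCount, filter_true_of_mem fun t _ => hopen t, card_univ, Fintype.card_fin]

lemma exists_occupant_of_openCount_eq {f : P → Option (Fin k)} (h : openCount f = k)
    (t : Fin k) : ∃ p, f p = some t := by
  have huniv : (univ.filter fun j : Fin k => ∃ p, f p = some j) = univ :=
    eq_univ_of_card _ (by rw [← openCount, h, Fintype.card_fin])
  have ht : t ∈ univ.filter fun j : Fin k => ∃ p, f p = some j := by
    rw [huniv]
    exact mem_univ t
  exact (mem_filter.mp ht).2

lemma card_unassigned_add_sum_card_occupants (f : P → Option (Fin k)) :
    #(univ.filter fun p => f p = none) + ∑ t, #(occupants f t) = Fintype.card P := by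
  have h := card_eq_sum_card_fiberwise (s := (univ : Finset P)) (t := univ)
    fun p _ => mem_univ (f p)
  rw [card_univ, univ_option, sum_insertNone] at h
  exact h.symm

lemma RoomsWithinCapacity.sum_card_occupants_le {f : P → Option (Fin k)}
    (hf : RoomsWithinCapacity f) : ∑ t, #(occupants f t) ≤ 3 * openCount f := by
  have hclosed : ∀ t ∈ univ, #(occupants f t) ≠ 0 → ∃ p, f p = some t := by
    intro t _ ht
    obtain ⟨p, hp⟩ := card_ne_zero.mp ht
    exact ⟨p, mem_occupants.mp hp⟩
  rw [← sum_filter_of_ne hclosed]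
  calc ∑ t ∈ univ.filter (fun t : Fin k => ∃ p, f p = some t), #(occupants f t)
      ≤ #(univ.filter fun t : Fin k => ∃ p, f p = some t) • 3 :=
        sum_le_card_nsmul _ _ _ fun t _ => hf t
    _ = 3 * openCount f := by rw [openCount, smul_eq_mul, mul_comm]

lemma exists_available (hcard : Fintype.card P = 3 * k) {f : P → Option (Fin k)}
    (hf : RoomsWithinCapacity f) {i : P} (hi : f i = none) : ∃ j, Available f i j := by
  have hcount := card_unassigned_add_sum_card_occupants f
  have hsum := hf.sum_card_occupants_le
  have hi0 := roommateCount_of_eq_none hi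
  rcases (openCount_le f).lt_or_eq with hlt | hopen
  · have hunassigned : 1 < #(univ.filter fun p => f p = none) := by omega
    obtain ⟨j, hj, hji⟩ := exists_mem_ne hunassigned i
    have hj0 := roommateCount_of_eq_none (mem_filter.mp hj).2
    exact ⟨j, hji, Or.inl (by omega), fun h => absurd h hlt.ne⟩
  · have hi_mem : 0 < #(univ.filter fun p => f p = none) := card_pos.mpr ⟨i, by simpa using hi⟩
    have hlt : ∑ t, #(occupants f t) < ∑ _t : Fin k, 3 := by
      simp only [sum_const, card_univ, Fintype.card_fin, smul_eq_mul]
      omega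
    obtain ⟨t, -, ht⟩ := exists_lt_of_sum_lt hlt
    obtain ⟨j, hj⟩ := exists_occupant_of_openCount_eq hopen t
    have hj0 := roommateCount_add_one hj
    exact ⟨j, fun h => by simp [h, hi] at hj, Or.inl (by omega), fun _ => by simp [hj]⟩

lemma sdStep_cases (rk : P → P → ℕ) (f : P → Option (Fin k)) (i : P) :
    ((¬ ∃ j, Available f i j) ∧ sdStep rk f i = f) ∨
    ∃ j, Available f i j ∧
      ((∃ t, f i = some t ∧ sdStep rk f i = moveTo f {j} t) ∨
       (∃ t, f i = none ∧ f j = some t ∧ sdStep rk f i = moveTo f {i} t) ∨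
       (f i = none ∧ f j = none ∧ freshRoom f = none ∧ sdStep rk f i = f) ∨
       (∃ t, f i = none ∧ f j = none ∧ freshRoom f = some t ∧
          sdStep rk f i = moveTo f {i, j} t)) := by
  by_cases hS : (univ.filter fun j => Available f i j).Nonempty
  · right
    set j := (exists_min_image _ (rk i) hS).choose
    have hj : Available f i j := (mem_filter.mp (exists_min_image _ (rk i) hS).choose_spec.1).2
    have hstep : sdStep rk f i =
        match f i, f j with
        | some t, _ => fun p => if p = j then some t else f p
        | none, some t => fun p => if p = i then some t else f p
        | none, none =>
            match freshRoom f with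
            | some t => fun p => if p = i ∨ p = j then some t else f p
            | none => f := by
      simp only [sdStep, dif_pos hS, j]
    have hmove : ∀ (s : Finset P) (t : Fin k),
        moveTo f s t = fun p => if p ∈ s then some t else f p := fun _ _ => rfl
    refine ⟨j, hj, ?_⟩
    split at hstep
    · next t hi => exact Or.inl ⟨t, hi, by simpa [hmove] using hstep⟩
    · next t hi hj' => exact Or.inr (Or.inl ⟨t, hi, hj', by simpa [hmove] using hstep⟩)
    · next hi hj' =>
        split at hstep
        · next t hfresh =>
            exact Or.inr (Or.inr (Or.inr ⟨t, hi, hj', hfresh, by simpa [hmove] using hstep⟩))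
        · next hfresh => exact Or.inr (Or.inr (Or.inl ⟨hi, hj', hfresh, hstep⟩))
  · left
    refine ⟨fun ⟨j, hj⟩ => hS ⟨j, mem_filter.mpr ⟨mem_univ j, hj⟩⟩, ?_⟩
    simp only [sdStep, dif_neg hS]

lemma sdStep_ne_none (rk : P → P → ℕ) {f : P → Option (Fin k)} (i : P) {p : P}
    (hp : f p ≠ none) : sdStep rk f i p ≠ none := by
  rcases sdStep_cases rk f i with
    ⟨-, he⟩ | ⟨j, -, ⟨t, -, he⟩ | ⟨t, -, -, he⟩ | ⟨-, -, -, he⟩ | ⟨t, -, -, -, he⟩⟩ <;>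
    rw [he] <;> first | exact hp | exact moveTo_ne_none hp

lemma roomsWithinCapacity_sdStep (rk : P → P → ℕ) {f : P → Option (Fin k)}
    (hf : RoomsWithinCapacity f) (i : P) : RoomsWithinCapacity (sdStep rk f i) := by
  rcases sdStep_cases rk f i with
    ⟨-, he⟩ | ⟨j, hij, ⟨t, hi, he⟩ | ⟨t, hi, hj, he⟩ | ⟨-, -, -, he⟩ | ⟨t, -, -, hfresh, he⟩⟩
  · rwa [he]
  · rw [he]
    apply roomsWithinCapacity_moveTo hf
    by_cases hj : f j = some t
    · rw [union_eq_right.mpr (by simpa using hj)]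
      exact hf t
    · have := card_occupants_le_two_of_available hij (fun h => hj (h ▸ hi)) (Or.inl hi)
      have := card_union_le {j} (occupants f t)
      rw [card_singleton] at this
      omega
  · rw [he]
    apply roomsWithinCapacity_moveTo hf
    have := card_occupants_le_two_of_available hij (by simp [hi, hj]) (Or.inr hj)
    have := card_union_le {i} (occupants f t)
    rw [card_singleton] at this
    omega
  · rwa [he]
  · rw [he]
    apply roomsWithinCapacity_moveTo hf
    have hempty : occupants f t = ∅ :=
      eq_empty_of_forall_notMem fun p hp => freshRoom_eq_some hfresh p (mem_occupants.mp hp)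
    rw [hempty, union_empty]
    exact card_le_two.trans (by norm_num)

lemma sdStep_self_ne_none (rk : P → P → ℕ) (hcard : Fintype.card P = 3 * k)
    {f : P → Option (Fin k)} (hf : RoomsWithinCapacity f) (i : P) : sdStep rk f i i ≠ none := by
  by_cases hi : f i = none
  swap
  · exact sdStep_ne_none rk i hi
  rcases sdStep_cases rk f i with
    ⟨hno, -⟩ | ⟨j, hij, ⟨t, hi', -⟩ | ⟨t, -, -, he⟩ | ⟨-, hj, hfresh, -⟩ | ⟨t, -, -, -, he⟩⟩
  · exact absurd (exists_available hcard hf hi) hno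
  · simp [hi] at hi'
  · simp [he, moveTo_of_mem (mem_singleton_self i)]
  · exact (hij.2.2 (openCount_eq_of_freshRoom_eq_none hfresh) hj).elim
  · simp [he, moveTo_of_mem (mem_insert_self i {j})]

lemma roomsWithinCapacity_foldl_sdStep (rk : P → P → ℕ) (l : List P) {f : P → Option (Fin k)}
    (hf : RoomsWithinCapacity f) : RoomsWithinCapacity (l.foldl (sdStep rk) f) := by
  induction l generalizing f with
  | nil => exact hf
  | cons i l ih => exact ih (roomsWithinCapacity_sdStep rk hf i)

lemma foldl_sdStep_ne_none (rk : P → P → ℕ) (hcard : Fintype.card P = 3 * k) (l : List P)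
    {f : P → Option (Fin k)} (hf : RoomsWithinCapacity f) {p : P} (hp : f p ≠ none ∨ p ∈ l) :
    l.foldl (sdStep rk) f p ≠ none := by
  induction l generalizing f with
  | nil => simpa using hp
  | cons i l ih =>
      apply ih (roomsWithinCapacity_sdStep rk hf i)
      rcases hp with hp | hp
      · exact Or.inl (sdStep_ne_none rk i hp)
      · rcases List.mem_cons.mp hp with rfl | hp
        · exact Or.inl (sdStep_self_ne_none rk hcard hf p)
        · exact Or.inr hp

lemma RoomsWithinCapacity.card_occupants_eq_three (hcard : Fintype.card P = 3 * k)
    {f : P → Option (Fin k)} (hf : RoomsWithinCapacity f) (hassigned : ∀ p, f p ≠ none)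
    (t : Fin k) : #(occupants f t) = 3 := by
  have hsum : ∑ t, #(occupants f t) = ∑ _t : Fin k, 3 := by
    have := card_unassigned_add_sum_card_occupants f
    rw [filter_false_of_mem fun p _ => hassigned p, card_empty] at this
    simp only [sum_const, card_univ, Fintype.card_fin, smul_eq_mul]
    omega
  exact (sum_eq_sum_iff_of_le fun t _ => hf t).mp hsum t (mem_univ t)

end SerialDictatorship

theorem sd_best_produces_feasible_assignment_general (k : ℕ) (rk : P → P → ℕ)
    (hcard : Fintype.card P = 3 * k)
    (order : List P) (hall : ∀ p : P, p ∈ order) :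
    (∀ p : P, ∃ j : Fin k, sdRun (k := k) rk order p = some j) ∧
    (∀ j : Fin k,
      (univ.filter fun p : P => sdRun (k := k) rk order p = some j).card = 3) := by
  have hempty : RoomsWithinCapacity fun _ : P => (none : Option (Fin k)) := by
    intro t
    simp [occupants]
  have hcap : RoomsWithinCapacity (sdRun (k := k) rk order) :=
    roomsWithinCapacity_foldl_sdStep rk order hempty
  have hassigned (p : P) : sdRun (k := k) rk order p ≠ none :=
    foldl_sdStep_ne_none rk hcard order hempty (Or.inr (hall p))
  exact ⟨fun p => Option.ne_none_iff_exists'.mp (hassigned p),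
    hcap.card_occupants_eq_three hcard hassigned⟩

/-- With `3k` players having strict complete preferences, `k` rooms of size 3 and
best-roommate comparison, serial dictatorship produces a feasible assignment:
every player ends up in a room, and every room has exactly 3 players. -/
theorem sd_best_produces_feasible_assignment (k : ℕ) (rk : P → P → ℕ)
    (hstrict : ∀ i j j' : P, j ≠ i → j' ≠ i → rk i j = rk i j' → j = j')
    (hcard : Fintype.card P = 3 * k)
    (order : List P) (hnodup : order.Nodup) (hall : ∀ p : P, p ∈ order) :
    (∀ p : P, ∃ j : Fin k, sdRun (k := k) rk order p = some j) ∧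
    (∀ j : Fin k,
      (univ.filter fun p : P => sdRun (k := k) rk order p = some j).card = 3) :=
  sd_best_produces_feasible_assignment_general k rk hcard order hall

end
end
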